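/- arXiv:2308.01504 — 3 statements merged into one kernel-verified Lean document; each statement's English description precedes it below -/
import Mathlib

section
/- Let G = N ⋊_φ H be a semidirect product of finite groups that is D-quasirandom on N for some real D > 0. Then for every integer k ≥ 2 and all subsets X₀, X₁, …, X_k ⊆ G, writing M_k = #{(x₀,x₁,…,x_k) ∈ X₀×X₁×⋯×X_k : x₁x₂⋯x_k = x₀} and Ṁ_k = #{(x₀,x₁,…,x_k) ∈ X₀×X₁×⋯×X_k : ẋ₁ẋ₂⋯ẋ_k = ẋ₀}, one has |M_k − Ṁ_k/|N|| ≤ √(|G|^{k−1}|X₀||X₁|⋯|X_k| / D^{k−1}). -/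
/-- A representation is irreducible if the space is nontrivial and the only
invariant subspaces are `⊥` and `⊤`. -/
def IsIrreducibleRep {G V : Type*} [Group G] [AddCommGroup V] [Module ℂ V]
    (ρ : Representation ℂ G V) : Prop :=
  Nontrivial V ∧ ∀ W : Submodule ℂ V, (∀ g : G, ∀ v ∈ W, ρ g v ∈ W) → W = ⊥ ∨ W = ⊤

/-- `G = N ⋊[φ] H` is `D`-quasirandom on `N`: every irreducible complex representation
of `G` of type II (i.e. one that is nontrivial on `N × {1}`) has degree at least `D`. -/
def QuasirandomOn {N H : Type} [Group N] [Group H] (φ : H →* MulAut N) (D : ℝ) : Prop :=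
  ∀ (V : Type) [AddCommGroup V] [Module ℂ V] [FiniteDimensional ℂ V]
    (ρ : Representation ℂ (N ⋊[φ] H) V), IsIrreducibleRep ρ →
    (∃ z : N, ρ (SemidirectProduct.inl z) ≠ 1) → D ≤ (Module.finrank ℂ V : ℝ)


set_option linter.unusedSectionVars false

noncomputable section MixingAux

namespace MixingAux

open Finset

variable {G : Type} [Group G] [Fintype G] [DecidableEq G]

/-- Convolution of functions on a finite group. -/
def conv (v u : G → ℂ) : G → ℂ := fun x => ∑ y : G, v y * u (y⁻¹ * x)

/-- Dirac delta at the identity. -/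
def dd (G : Type) [Group G] [DecidableEq G] : G → ℂ := fun x => if x = 1 then 1 else 0

/-- Squared ℓ² norm. -/
def l2 (v : G → ℂ) : ℝ := ∑ x : G, ‖v x‖ ^ 2

lemma l2_nonneg (v : G → ℂ) : 0 ≤ l2 v :=
  Finset.sum_nonneg fun _ _ => sq_nonneg _

lemma conv_dd (v : G → ℂ) : conv v (dd G) = v := by
  funext x
  simp only [conv, dd]
  rw [Finset.sum_eq_single x]
  · simp
  · intro y _ hy
    have : y⁻¹ * x ≠ 1 := by
      intro h
      exact hy (by rwa [inv_mul_eq_one] at h)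
    simp [this]
  · simp

lemma conv_assoc (a b c : G → ℂ) : conv (conv a b) c = conv a (conv b c) := by
  funext x
  show (∑ y : G, (∑ s : G, a s * b (s⁻¹ * y)) * c (y⁻¹ * x))
      = ∑ s : G, a s * (∑ t : G, b t * c (t⁻¹ * (s⁻¹ * x)))
  calc (∑ y : G, (∑ s : G, a s * b (s⁻¹ * y)) * c (y⁻¹ * x))
      = ∑ y : G, ∑ s : G, (a s * b (s⁻¹ * y)) * c (y⁻¹ * x) := by
        simp [Finset.sum_mul]
    _ = ∑ s : G, ∑ y : G, (a s * b (s⁻¹ * y)) * c (y⁻¹ * x) := Finset.sum_comm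
    _ = ∑ s : G, ∑ t : G, (a s * b t) * c (t⁻¹ * (s⁻¹ * x)) := by
        refine Finset.sum_congr rfl fun s _ => ?_
        rw [← Equiv.sum_comp (Equiv.mulLeft s) (fun y => (a s * b (s⁻¹ * y)) * c (y⁻¹ * x))]
        refine Finset.sum_congr rfl fun t _ => ?_
        simp [Equiv.coe_mulLeft, inv_mul_cancel_left, mul_inv_rev, mul_assoc]
    _ = ∑ s : G, a s * (∑ t : G, b t * c (t⁻¹ * (s⁻¹ * x))) := by
        simp [Finset.mul_sum, mul_assoc]

lemma conv_sub_left (a b c : G → ℂ) : conv (a - b) c = conv a c - conv b c := by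
  funext x
  simp [conv, sub_mul, Finset.sum_sub_distrib]

lemma conv_foldr_eq_foldl (l : List (G → ℂ)) (w : G → ℂ) :
    conv w (l.foldr conv (dd G)) = l.foldl conv w := by
  induction l generalizing w with
  | nil => simpa [List.foldr, List.foldl] using conv_dd w
  | cons f l ih =>
    simp only [List.foldr_cons, List.foldl_cons]
    rw [← conv_assoc, ih]

lemma foldr_conv_apply : ∀ (n : ℕ) (g : Fin n → G → ℂ) (x : G),
    ((List.ofFn g).foldr conv (dd G)) x =
      ∑ y : Fin n → G, if (List.ofFn y).prod = x then ∏ i, g i (y i) else 0 := by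
  intro n
  induction n with
  | zero =>
    intro g x
    simp [dd, List.ofFn_zero, eq_comm]
  | succ n ih =>
    intro g x
    have hsum : ∀ F : (Fin (n+1) → G) → ℂ,
        ∑ y : Fin (n+1) → G, F y = ∑ p : G × (Fin n → G), F (Fin.cons p.1 p.2 : Fin (n+1) → G) :=
      fun F => (Fintype.sum_bijective _ (Fin.consEquiv (fun _ : Fin (n+1) => G)).bijective
        (fun p => F (Fin.cons p.1 p.2 : Fin (n+1) → G)) F (fun p => rfl)).symm
    rw [hsum]
    rw [Fintype.sum_prod_type]
    rw [List.ofFn_succ]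
    simp only [List.foldr_cons]
    show ∑ y : G, g 0 y * ((List.ofFn fun i => g i.succ).foldr conv (dd G)) (y⁻¹ * x) = _
    refine Finset.sum_congr rfl fun y0 _ => ?_
    rw [ih (fun i => g i.succ) (y0⁻¹ * x), Finset.mul_sum]
    refine Finset.sum_congr rfl fun y _ => ?_
    rw [mul_ite, mul_zero]
    have hcond : ((List.ofFn (Fin.cons y0 y : Fin (n+1) → G)).prod = x) ↔
        ((List.ofFn y).prod = y0⁻¹ * x) := by
      rw [List.ofFn_succ]
      simp only [Fin.cons_zero, Fin.cons_succ, List.prod_cons]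
      constructor
      · intro h; rw [← h]; group
      · intro h; rw [h]; group
    have hprod : (∏ i : Fin (n+1), g i ((Fin.cons y0 y : Fin (n+1) → G) i)) =
        g 0 y0 * ∏ i : Fin n, g i.succ (y i) := by
      rw [Fin.prod_univ_succ]
      simp
    rw [hprod]
    by_cases hc : (List.ofFn y).prod = y0⁻¹ * x
    · rw [if_pos hc, if_pos (hcond.mpr hc)]
    · rw [if_neg hc, if_neg (fun h => hc (hcond.mp h))]

lemma abs_sum_le_sqrt (a b : G → ℂ) :
    ‖∑ x : G, a x * b x‖ ≤ Real.sqrt (l2 a) * Real.sqrt (l2 b) := by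
  calc ‖∑ x : G, a x * b x‖ ≤ ∑ x : G, ‖a x * b x‖ := by
        simpa using norm_sum_le Finset.univ (fun x => a x * b x)
    _ = ∑ x : G, ‖a x‖ * ‖b x‖ := by
        refine Finset.sum_congr rfl fun x _ => ?_
        simp [norm_mul]
    _ ≤ Real.sqrt (l2 a) * Real.sqrt (l2 b) := by
        have h := Finset.sum_mul_sq_le_sq_mul_sq Finset.univ (fun x => ‖a x‖) (fun x => ‖b x‖)
        have h0 : (0:ℝ) ≤ ∑ x : G, ‖a x‖ * ‖b x‖ :=
          Finset.sum_nonneg fun x _ => mul_nonneg (norm_nonneg _) (norm_nonneg _)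
        have := Real.sqrt_le_sqrt h
        rw [Real.sqrt_sq h0] at this
        refine this.trans (le_of_eq ?_)
        exact (Real.sqrt_mul (l2_nonneg a) (l2 b)).symm ▸ congrArg Real.sqrt rfl


section Semidirect

open SemidirectProduct

variable {N H : Type} [Group N] [Group H] [Fintype N] [Fintype H] {φ : H →* MulAut N}
variable [DecidableEq H]

/-- The obvious equivalence with the product. -/
def sdEquiv (φ : H →* MulAut N) : N × H ≃ (N ⋊[φ] H) where
  toFun p := ⟨p.1, p.2⟩
  invFun g := (g.left, g.right)
  left_inv p := rfl
  right_inv g := by cases g; rfl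

instance : Fintype (N ⋊[φ] H) := Fintype.ofEquiv _ (sdEquiv φ)

variable [DecidableEq (N ⋊[φ] H)]

lemma sum_sd (F : (N ⋊[φ] H) → ℂ) :
    ∑ x : N ⋊[φ] H, F x = ∑ h : H, ∑ z : N, F (inl z * inr h) := by
  rw [← Equiv.sum_comp (sdEquiv φ) F, Fintype.sum_prod_type_right]
  refine Finset.sum_congr rfl fun h _ => Finset.sum_congr rfl fun z _ => ?_
  congr 1
  exact mk_eq_inl_mul_inr h z

lemma cardN_ne_zero : ((Fintype.card N : ℂ)) ≠ 0 := by
  exact_mod_cast Nat.cast_ne_zero.mpr Fintype.card_ne_zero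

/-- Averaging over the fibers of `rightHom`. -/
def Pav (u : (N ⋊[φ] H) → ℂ) : (N ⋊[φ] H) → ℂ :=
  fun x => (∑ z : N, u (inl z * x)) / (Fintype.card N : ℂ)

/-- A function is balanced if it sums to zero on each fiber of `rightHom`. -/
def Bal (v : (N ⋊[φ] H) → ℂ) : Prop := ∀ x : N ⋊[φ] H, ∑ z : N, v (inl z * x) = 0

lemma Pav_inl_mul (u : (N ⋊[φ] H) → ℂ) (z : N) (x : N ⋊[φ] H) :
    Pav u (inl z * x) = Pav u x := by
  unfold Pav
  congr 1
  rw [← Equiv.sum_comp (Equiv.mulRight z) (fun w => u (inl w * x))]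
  refine Finset.sum_congr rfl fun w _ => ?_
  simp [Equiv.coe_mulRight, mul_assoc, map_mul]

lemma Pav_conv (f u : (N ⋊[φ] H) → ℂ) : Pav (conv f u) = conv (Pav f) u := by
  funext x
  show (∑ z : N, conv f u (inl z * x)) / (Fintype.card N : ℂ)
      = ∑ y : N ⋊[φ] H, (∑ z : N, f (inl z * y)) / (Fintype.card N : ℂ) * u (y⁻¹ * x)
  rw [Finset.sum_div]
  have key : ∀ z : N, conv f u (inl z * x) = ∑ y : N ⋊[φ] H, f (inl z * y) * u (y⁻¹ * x) := by
    intro z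
    show (∑ y : N ⋊[φ] H, f y * u (y⁻¹ * (inl z * x))) = _
    rw [← Equiv.sum_comp (Equiv.mulLeft (inl z : N ⋊[φ] H)) (fun y => f y * u (y⁻¹ * (inl z * x)))]
    refine Finset.sum_congr rfl fun y _ => ?_
    simp [Equiv.coe_mulLeft, mul_inv_rev, mul_assoc, inv_mul_cancel_left]
  calc (∑ z : N, conv f u (inl z * x) / (Fintype.card N : ℂ))
      = ∑ z : N, (∑ y : N ⋊[φ] H, f (inl z * y) * u (y⁻¹ * x)) / (Fintype.card N : ℂ) := by
        refine Finset.sum_congr rfl fun z _ => ?_; rw [key z]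
    _ = ∑ z : N, ∑ y : N ⋊[φ] H, (f (inl z * y) * u (y⁻¹ * x)) / (Fintype.card N : ℂ) := by
        refine Finset.sum_congr rfl fun z _ => ?_
        rw [Finset.sum_div]
    _ = ∑ y : N ⋊[φ] H, ∑ z : N, (f (inl z * y) * u (y⁻¹ * x)) / (Fintype.card N : ℂ) :=
        Finset.sum_comm
    _ = ∑ y : N ⋊[φ] H, (∑ z : N, f (inl z * y)) / (Fintype.card N : ℂ) * u (y⁻¹ * x) := by
        refine Finset.sum_congr rfl fun y _ => ?_
        rw [← Finset.sum_div, ← Finset.sum_mul, div_mul_eq_mul_div]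

lemma bal_sub_Pav (f : (N ⋊[φ] H) → ℂ) : Bal (f - Pav f) := by
  intro x
  have h1 : ∑ z : N, (f - Pav f) (inl z * x) =
      (∑ z : N, f (inl z * x)) - ∑ z : N, Pav f (inl z * x) := by
    simp [Finset.sum_sub_distrib]
  rw [h1]
  have h2 : ∀ z : N, Pav f (inl z * x) = Pav f x := fun z => Pav_inl_mul f z x
  rw [Finset.sum_congr rfl fun z _ => h2 z, Finset.sum_const, Finset.card_univ]
  show (∑ z : N, f (inl z * x)) - (Fintype.card N : ℕ) • Pav f x = 0
  rw [nsmul_eq_mul]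
  unfold Pav
  rw [mul_div_cancel₀ _ cardN_ne_zero]
  ring

lemma bal_conv {v : (N ⋊[φ] H) → ℂ} (hv : Bal v) (u : (N ⋊[φ] H) → ℂ) : Bal (conv v u) := by
  intro x
  have key : ∀ z : N, conv v u (inl z * x) = ∑ y : N ⋊[φ] H, v (inl z * y) * u (y⁻¹ * x) := by
    intro z
    show (∑ y : N ⋊[φ] H, v y * u (y⁻¹ * (inl z * x))) = _
    rw [← Equiv.sum_comp (Equiv.mulLeft (inl z : N ⋊[φ] H)) (fun y => v y * u (y⁻¹ * (inl z * x)))]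
    refine Finset.sum_congr rfl fun y _ => ?_
    simp [Equiv.coe_mulLeft, mul_inv_rev, mul_assoc, inv_mul_cancel_left]
  rw [Finset.sum_congr rfl fun z _ => key z, Finset.sum_comm]
  refine Finset.sum_eq_zero fun y _ => ?_
  rw [← Finset.sum_mul, hv y, zero_mul]

lemma l2_sub_Pav_le (f : (N ⋊[φ] H) → ℂ) : l2 (f - Pav f) ≤ l2 f := by
  have hip : ∑ x : N ⋊[φ] H, (f x * (starRingEnd ℂ) (Pav f x)) =
      ∑ x : N ⋊[φ] H, (Pav f x * (starRingEnd ℂ) (Pav f x)) := by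
    rw [sum_sd, sum_sd]
    refine Finset.sum_congr rfl fun h _ => ?_
    have hP : ∀ z : N, Pav f (inl z * inr h) = Pav f (inr h) :=
      fun z => Pav_inl_mul f z (inr h)
    have lhs : ∑ z : N, f (inl z * inr h) * (starRingEnd ℂ) (Pav f (inl z * inr h))
        = (∑ z : N, f (inl z * inr h)) * (starRingEnd ℂ) (Pav f (inr h)) := by
      rw [Finset.sum_mul]
      exact Finset.sum_congr rfl fun z _ => by rw [hP z]
    have rhs : ∑ z : N, Pav f (inl z * inr h) * (starRingEnd ℂ) (Pav f (inl z * inr h))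
        = (Fintype.card N : ℂ) * (Pav f (inr h) * (starRingEnd ℂ) (Pav f (inr h))) := by
      rw [Finset.sum_congr rfl fun z _ => by rw [hP z]]
      simp [Finset.sum_const, Finset.card_univ]
    rw [lhs, rhs]
    have : (∑ z : N, f (inl z * inr h)) = (Fintype.card N : ℂ) * Pav f (inr h) := by
      unfold Pav
      rw [mul_div_cancel₀ _ cardN_ne_zero]
    rw [this]
    ring
  -- now expand l2 of the difference
  have expand : l2 (f - Pav f) = l2 f - l2 (Pav f) := by
    unfold l2
    have : ∀ x : N ⋊[φ] H, ‖(f - Pav f) x‖ ^ 2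
        = ‖f x‖ ^ 2 + ‖Pav f x‖ ^ 2 - 2 * (f x * (starRingEnd ℂ) (Pav f x)).re := by
      intro x
      show ‖f x - Pav f x‖ ^ 2 = _
      rw [Complex.sq_norm, Complex.sq_norm, Complex.sq_norm, Complex.normSq_sub]
    rw [Finset.sum_congr rfl fun x _ => this x]
    rw [Finset.sum_sub_distrib, Finset.sum_add_distrib]
    have hre : ∑ x : N ⋊[φ] H, 2 * (f x * (starRingEnd ℂ) (Pav f x)).re
        = 2 * (∑ x : N ⋊[φ] H, (f x * (starRingEnd ℂ) (Pav f x))).re := by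
      rw [Complex.re_sum, Finset.mul_sum]
    rw [hre, hip]
    have : (∑ x : N ⋊[φ] H, (Pav f x * (starRingEnd ℂ) (Pav f x))).re
        = ∑ x : N ⋊[φ] H, ‖Pav f x‖ ^ 2 := by
      rw [Complex.re_sum]
      refine Finset.sum_congr rfl fun x _ => ?_
      rw [Complex.mul_conj]
      simp [Complex.normSq_eq_norm_sq, ← Complex.ofReal_pow]
    rw [this]
    ring
  rw [expand]
  have := l2_nonneg (Pav f : (N ⋊[φ] H) → ℂ)
  linarith

lemma ite_right_split (w x : N ⋊[φ] H) (t : ℂ) :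
    (if w.right = x.right then t else 0) = ∑ z : N, if w = inl z * x then t else 0 := by
  by_cases hc : w.right = x.right
  · rw [if_pos hc]
    rw [Finset.sum_eq_single ((w * x⁻¹).left)]
    · rw [if_pos]
      have h1 : (w * x⁻¹).right = 1 := by
        rw [mul_right]  -- (w * x⁻¹).right = w.right * (x⁻¹).right
        rw [inv_right, hc, mul_inv_cancel]
      have := inl_left_mul_inr_right (w * x⁻¹)
      rw [h1] at this
      simp only [map_one, mul_one] at this
      calc w = (w * x⁻¹) * x := by group
        _ = inl ((w * x⁻¹).left) * x := by rw [this]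
    · intro z _ hz
      rw [if_neg]
      intro hw
      apply hz
      rw [hw]
      simp [mul_assoc]
    · intro hmem; exact absurd (Finset.mem_univ _) hmem
  · rw [if_neg hc]
    refine (Finset.sum_eq_zero fun z _ => ?_).symm
    rw [if_neg]
    intro hw
    apply hc
    rw [hw]
    simp

end Semidirect


section OpAux

local notation "⟪" x ", " y "⟫" => @inner ℂ _ _ x y

variable {G : Type} [Group G] [Fintype G] [DecidableEq G]

lemma norm_sq_eq_l2 (u : EuclideanSpace ℂ G) : ‖u‖ ^ 2 = l2 (u : G → ℂ) := by
  rw [EuclideanSpace.norm_eq, Real.sq_sqrt]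
  · rfl
  · exact Finset.sum_nonneg fun _ _ => sq_nonneg _

/-- Convolution by `v` as a linear endomorphism of `ℓ²(G)`. -/
def convL (v : G → ℂ) : EuclideanSpace ℂ G →ₗ[ℂ] EuclideanSpace ℂ G where
  toFun u := WithLp.toLp 2 (conv v u : G → ℂ)
  map_add' a b := by
    ext x
    show (∑ y : G, v y * (a + b) (y⁻¹ * x)) = _
    simp [conv, mul_add, Finset.sum_add_distrib]
  map_smul' c a := by
    ext x
    show (∑ y : G, v y * (c • a) (y⁻¹ * x)) = _
    simp [conv, Finset.mul_sum, smul_eq_mul]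
    refine Finset.sum_congr rfl fun y _ => by ring

lemma convL_apply (v : G → ℂ) (u : EuclideanSpace ℂ G) :
    (convL v u : G → ℂ) = conv v (u : G → ℂ) := rfl

/-- Right translation as a linear endomorphism of `ℓ²(G)`. -/
def Rlin (g : G) : EuclideanSpace ℂ G →ₗ[ℂ] EuclideanSpace ℂ G where
  toFun u := WithLp.toLp 2 (fun x => u (x * g) : G → ℂ)
  map_add' a b := rfl
  map_smul' c a := rfl

lemma Rlin_apply (g : G) (u : EuclideanSpace ℂ G) (x : G) : Rlin g u x = u (x * g) := rfl

/-- The right regular representation. -/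
def rightRegRep : Representation ℂ G (EuclideanSpace ℂ G) where
  toFun g := Rlin g
  map_one' := by
    refine LinearMap.ext fun u => ?_
    ext x
    show u (x * 1) = u x
    rw [mul_one]
  map_mul' g₁ g₂ := by
    refine LinearMap.ext fun u => ?_
    ext x
    show u (x * (g₁ * g₂)) = u (x * g₁ * g₂)
    rw [mul_assoc]

lemma inner_euclidean (a b : EuclideanSpace ℂ G) :
    ⟪a, b⟫ = ∑ x : G, (starRingEnd ℂ) (a x) * b x := by
  rw [PiLp.inner_apply]
  exact Finset.sum_congr rfl fun x _ => RCLike.inner_apply' _ _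

lemma convL_comm_Rlin (v : G → ℂ) (g : G) :
    (convL v) ∘ₗ (Rlin g) = (Rlin g) ∘ₗ (convL v) := by
  refine LinearMap.ext fun u => ?_
  ext x
  show (∑ y : G, v y * u (y⁻¹ * x * g)) = ∑ y : G, v y * u (y⁻¹ * (x * g))
  refine Finset.sum_congr rfl fun y _ => by rw [mul_assoc]

lemma adjoint_Rlin (g : G) : LinearMap.adjoint (Rlin g) = (Rlin g⁻¹ :
    EuclideanSpace ℂ G →ₗ[ℂ] EuclideanSpace ℂ G) := by
  symm
  rw [LinearMap.eq_adjoint_iff]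
  intro a b
  rw [inner_euclidean, inner_euclidean]
  rw [← Equiv.sum_comp (Equiv.mulRight g) (fun t => (starRingEnd ℂ) ((Rlin g⁻¹ a) t) * b t)]
  refine Finset.sum_congr rfl fun t _ => ?_
  show (starRingEnd ℂ) (a (t * g * g⁻¹)) * b (t * g) = (starRingEnd ℂ) (a t) * b (t * g)
  rw [mul_inv_cancel_right]

/-- Restriction of a representation to an invariant submodule. -/
def subRep {G' V : Type} [Group G'] [AddCommGroup V] [Module ℂ V]
    (σ : Representation ℂ G' V) (U : Submodule ℂ V) (hU : ∀ g, ∀ x ∈ U, σ g x ∈ U) :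
    Representation ℂ G' ↥U where
  toFun g := (σ g).restrict (hU g)
  map_one' := by
    refine LinearMap.ext fun x => Subtype.ext ?_
    simp [LinearMap.restrict_apply]
  map_mul' g₁ g₂ := by
    refine LinearMap.ext fun x => Subtype.ext ?_
    simp [LinearMap.restrict_apply, map_mul, Module.End.mul_apply]

lemma subRep_apply {G' V : Type} [Group G'] [AddCommGroup V] [Module ℂ V]
    (σ : Representation ℂ G' V) (U : Submodule ℂ V) (hU : ∀ g, ∀ x ∈ U, σ g x ∈ U)
    (g : G') (x : ↥U) : ((subRep σ U hU g x : ↥U) : V) = σ g (x : V) := rfl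

/-- Every nontrivial finite-dimensional representation contains a minimal nonzero
invariant submodule. -/
lemma exists_min_invariant {G' V : Type} [Group G'] [AddCommGroup V] [Module ℂ V]
    [FiniteDimensional ℂ V] (σ : Representation ℂ G' V) (hV : Nontrivial V) :
    ∃ U : Submodule ℂ V, U ≠ ⊥ ∧ (∀ g, ∀ x ∈ U, σ g x ∈ U) ∧
      ∀ U' : Submodule ℂ V, U' ≤ U → (∀ g, ∀ x ∈ U', σ g x ∈ U') → U' = ⊥ ∨ U' = U := by
  have htop : (⊤ : Submodule ℂ V) ≠ ⊥ := by
    intro h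
    obtain ⟨x, hx⟩ := exists_ne (0 : V)
    apply hx
    have : x ∈ (⊥ : Submodule ℂ V) := h ▸ Submodule.mem_top
    simpa using this
  set S : Set ℕ := {n | ∃ U : Submodule ℂ V, U ≠ ⊥ ∧ (∀ g, ∀ x ∈ U, σ g x ∈ U) ∧
    Module.finrank ℂ U = n} with hS
  have hSne : S.Nonempty := ⟨Module.finrank ℂ (⊤ : Submodule ℂ V),
    ⊤, htop, fun g x _ => Submodule.mem_top, rfl⟩
  obtain ⟨U, hUne, hUinv, hUrank⟩ := Nat.sInf_mem hSne
  refine ⟨U, hUne, hUinv, fun U' hle hinv => ?_⟩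
  by_cases h0 : U' = ⊥
  · exact Or.inl h0
  · right
    have hmem : Module.finrank ℂ U' ∈ S := ⟨U', h0, hinv, rfl⟩
    have h1 : sInf S ≤ Module.finrank ℂ U' := Nat.sInf_le hmem
    rw [← hUrank] at h1
    exact Submodule.eq_of_le_of_finrank_le hle h1

lemma subRep_irred {G' V : Type} [Group G'] [AddCommGroup V] [Module ℂ V]
    [FiniteDimensional ℂ V] (σ : Representation ℂ G' V) (U : Submodule ℂ V)
    (hUne : U ≠ ⊥) (hU : ∀ g, ∀ x ∈ U, σ g x ∈ U)
    (hmin : ∀ U' : Submodule ℂ V, U' ≤ U → (∀ g, ∀ x ∈ U', σ g x ∈ U') → U' = ⊥ ∨ U' = U) :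
    IsIrreducibleRep (subRep σ U hU) := by
  constructor
  · exact Submodule.nontrivial_iff_ne_bot.mpr hUne
  · intro W' hW'
    have hinj : Function.Injective (Submodule.map U.subtype) :=
      Submodule.map_injective_of_injective U.injective_subtype
    set U'' := W'.map U.subtype with hU''
    have hle : U'' ≤ U := by
      rintro x ⟨⟨y, hy⟩, _, rfl⟩
      exact hy
    have hinv : ∀ g, ∀ x ∈ U'', σ g x ∈ U'' := by
      rintro g x ⟨w, hw, rfl⟩
      exact ⟨subRep σ U hU g w, hW' g w hw, rfl⟩
    rcases hmin U'' hle hinv with h | h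
    · left
      apply hinj
      rw [Submodule.map_bot]
      exact h
    · right
      apply hinj
      rw [Submodule.map_subtype_top]
      exact h

lemma sum_l2_conv_le (v : G → ℂ) {ι : Type} [Fintype ι]
    (w : ι → EuclideanSpace ℂ G) (hw : Orthonormal ℂ w) :
    ∑ i : ι, l2 (conv v (w i : G → ℂ)) ≤ (Fintype.card G : ℝ) * l2 v := by
  classical
  let r : G → EuclideanSpace ℂ G := fun x => WithLp.toLp 2 (fun t => (starRingEnd ℂ) (v (x * t⁻¹)))
  have hconv : ∀ (u : EuclideanSpace ℂ G) (x : G),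
      conv v (u : G → ℂ) x = ⟪r x, u⟫ := by
    intro u x
    rw [inner_euclidean]
    have h1 : ∀ t : G, (starRingEnd ℂ) (r x t) * u t = v (x * t⁻¹) * u t := by
      intro t; show (starRingEnd ℂ) ((starRingEnd ℂ) (v (x * t⁻¹))) * u t = _
      rw [Complex.conj_conj]
    rw [Finset.sum_congr rfl fun t _ => h1 t]
    show (∑ y : G, v y * u (y⁻¹ * x)) = _
    rw [← Equiv.sum_comp ((Equiv.inv G).trans (Equiv.mulLeft x)) (fun y => v y * u (y⁻¹ * x))]
    refine Finset.sum_congr rfl fun t _ => ?_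
    simp only [Equiv.trans_apply, Equiv.inv_apply, Equiv.coe_mulLeft]
    congr 1
    rw [mul_inv_rev, inv_inv, mul_assoc, inv_mul_cancel, mul_one]
  have hr : ∀ x : G, ‖r x‖ ^ 2 = l2 v := by
    intro x
    rw [norm_sq_eq_l2]
    show (∑ t : G, ‖(starRingEnd ℂ) (v (x * t⁻¹))‖ ^ 2) = l2 v
    unfold l2
    rw [← Equiv.sum_comp ((Equiv.inv G).trans (Equiv.mulLeft x)) (fun y => ‖v y‖ ^ 2)]
    refine Finset.sum_congr rfl fun t _ => ?_
    simp only [Equiv.trans_apply, Equiv.inv_apply, Equiv.coe_mulLeft]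
    rw [RCLike.norm_conj]
  calc ∑ i : ι, l2 (conv v (w i : G → ℂ))
      = ∑ i : ι, ∑ x : G, ‖⟪w i, r x⟫‖ ^ 2 := by
        refine Finset.sum_congr rfl fun i _ => ?_
        show (∑ x : G, ‖conv v (w i : G → ℂ) x‖ ^ 2) = _
        refine Finset.sum_congr rfl fun x _ => ?_
        rw [hconv (w i) x, ← inner_conj_symm, RCLike.norm_conj]
    _ = ∑ x : G, ∑ i : ι, ‖⟪w i, r x⟫‖ ^ 2 := Finset.sum_comm
    _ ≤ ∑ x : G, ‖r x‖ ^ 2 := by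
        refine Finset.sum_le_sum fun x _ => ?_
        exact hw.sum_inner_products_le (r x)
    _ = ∑ x : G, l2 v := Finset.sum_congr rfl fun x _ => hr x
    _ = (Fintype.card G : ℝ) * l2 v := by
        rw [Finset.sum_const, Finset.card_univ, nsmul_eq_mul]

end OpAux


section KeyLemma

open SemidirectProduct

local notation "⟪" x ", " y "⟫" => @inner ℂ _ _ x y

variable {N H : Type} [Group N] [Group H] [Fintype N] [Fintype H] {φ : H →* MulAut N}
variable [DecidableEq (N ⋊[φ] H)] [DecidableEq H]

lemma conj_inl (x : N ⋊[φ] H) (z : N) : ∃ n' : N, x⁻¹ * inl z * x = inl n' := by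
  have hmem : x⁻¹ * inl z * x ∈ (inl : N →* N ⋊[φ] H).range := by
    rw [range_inl_eq_ker_rightHom]
    show rightHom (x⁻¹ * inl z * x) = 1
    simp
  obtain ⟨n', hn'⟩ := hmem
  exact ⟨n', hn'.symm⟩

lemma conv_rinv_zero {v : (N ⋊[φ] H) → ℂ} (hv : Bal v) {w : (N ⋊[φ] H) → ℂ}
    (hw : ∀ (x : N ⋊[φ] H) (z : N), w (x * inl z) = w x) : conv v w = 0 := by
  funext x
  show (∑ y : N ⋊[φ] H, v y * w (y⁻¹ * x)) = 0
  rw [sum_sd (fun y => v y * w (y⁻¹ * x))]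
  refine Finset.sum_eq_zero fun h _ => ?_
  have key : ∀ z : N, w ((inl z * inr h)⁻¹ * x) = w ((inr h)⁻¹ * x) := by
    intro z
    obtain ⟨n', hn'⟩ := conj_inl (φ := φ) x z⁻¹
    have h2 : (inl z : N ⋊[φ] H)⁻¹ * x = x * inl n' := by
      rw [← hn', ← map_inv]
      group
    have h3 : (inl z * inr h : N ⋊[φ] H)⁻¹ * x = ((inr h)⁻¹ * x) * inl n' := by
      rw [mul_inv_rev, mul_assoc, h2, ← mul_assoc]
    rw [h3, hw]
  rw [Finset.sum_congr rfl fun z _ => by rw [key z]]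
  rw [← Finset.sum_mul, hv (inr h), zero_mul]

set_option maxHeartbeats 2000000 in
theorem lemL {D : ℝ} (hD : 0 < D) (hqr : QuasirandomOn φ D) {v : (N ⋊[φ] H) → ℂ}
    (hv : Bal v) (u : (N ⋊[φ] H) → ℂ) :
    l2 (conv v u) ≤ ((Fintype.card (N ⋊[φ] H) : ℝ) / D) * l2 v * l2 u := by
  classical
  let A : EuclideanSpace ℂ (N ⋊[φ] H) →ₗ[ℂ] EuclideanSpace ℂ (N ⋊[φ] H) := convL v
  let B := LinearMap.adjoint A * A
  have hB : B.IsSymmetric := LinearMap.isSymmetric_adjoint_mul_self A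
  have hBA : ∀ w : EuclideanSpace ℂ (N ⋊[φ] H), RCLike.re ⟪B w, w⟫ = ‖A w‖ ^ 2 := by
    intro w
    have h1 : ⟪B w, w⟫ = ⟪A w, A w⟫ := by
      show ⟪(LinearMap.adjoint A) (A w), w⟫ = _
      rw [LinearMap.adjoint_inner_left]
    rw [h1]
    exact inner_self_eq_norm_sq (A w)
  haveI : Nontrivial (EuclideanSpace ℂ (N ⋊[φ] H)) :=
    inferInstance
  set lam : ℝ := ⨆ x : { x : EuclideanSpace ℂ (N ⋊[φ] H) // x ≠ 0 },
    RCLike.re ⟪B x, x⟫ / ‖(x : EuclideanSpace ℂ (N ⋊[φ] H))‖ ^ 2 with hlam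
  have hbdd : BddAbove (Set.range fun x : { x : EuclideanSpace ℂ (N ⋊[φ] H) // x ≠ 0 } =>
      RCLike.re ⟪B x, x⟫ / ‖(x : EuclideanSpace ℂ (N ⋊[φ] H))‖ ^ 2) := by
    refine ⟨‖LinearMap.toContinuousLinearMap B‖, ?_⟩
    rintro y ⟨x, rfl⟩
    have hx : (0:ℝ) < ‖(x : EuclideanSpace ℂ (N ⋊[φ] H))‖ ^ 2 :=
      pow_pos (norm_pos_iff.mpr x.prop) 2
    rw [div_le_iff₀ hx]
    have h1 : RCLike.re ⟪B (x : EuclideanSpace ℂ (N ⋊[φ] H)), (x : EuclideanSpace ℂ (N ⋊[φ] H))⟫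
        ≤ ‖⟪B (x : EuclideanSpace ℂ (N ⋊[φ] H)), (x : EuclideanSpace ℂ (N ⋊[φ] H))⟫‖ :=
      RCLike.re_le_norm _
    have h2 : ‖⟪B (x : EuclideanSpace ℂ (N ⋊[φ] H)), (x : EuclideanSpace ℂ (N ⋊[φ] H))⟫‖
        ≤ ‖B (x : EuclideanSpace ℂ (N ⋊[φ] H))‖ * ‖(x : EuclideanSpace ℂ (N ⋊[φ] H))‖ :=
      norm_inner_le_norm _ _
    have h3 : ‖B (x : EuclideanSpace ℂ (N ⋊[φ] H))‖
        ≤ ‖LinearMap.toContinuousLinearMap B‖ * ‖(x : EuclideanSpace ℂ (N ⋊[φ] H))‖ :=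
      (LinearMap.toContinuousLinearMap B).le_opNorm _
    have hn : (0:ℝ) ≤ ‖(x : EuclideanSpace ℂ (N ⋊[φ] H))‖ := norm_nonneg _
    nlinarith
  have hray : ∀ w : EuclideanSpace ℂ (N ⋊[φ] H), ‖A w‖ ^ 2 ≤ lam * ‖w‖ ^ 2 := by
    intro w
    by_cases hw : w = 0
    · simp [hw]
    · have h := le_ciSup hbdd (⟨w, hw⟩ : { x : EuclideanSpace ℂ (N ⋊[φ] H) // x ≠ 0 })
      have hx : (0:ℝ) < ‖w‖ ^ 2 := pow_pos (norm_pos_iff.mpr hw) 2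
      rw [← hBA w]
      have h' : RCLike.re ⟪B w, w⟫ / ‖w‖ ^ 2 ≤ lam := h
      calc RCLike.re ⟪B w, w⟫ = (RCLike.re ⟪B w, w⟫ / ‖w‖ ^ 2) * ‖w‖ ^ 2 := by
            field_simp
        _ ≤ lam * ‖w‖ ^ 2 := mul_le_mul_of_nonneg_right h' (le_of_lt hx)
  have hlam_nonneg : 0 ≤ lam := by
    obtain ⟨w, hw⟩ := exists_ne (0 : EuclideanSpace ℂ (N ⋊[φ] H))
    have h1 := hray w
    have h2 : (0:ℝ) < ‖w‖ ^ 2 := pow_pos (norm_pos_iff.mpr hw) 2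
    nlinarith [sq_nonneg ‖A w‖]
  have hmain : lam ≤ (Fintype.card (N ⋊[φ] H) : ℝ) * l2 v / D := by
    rcases eq_or_lt_of_le hlam_nonneg with h0 | hpos
    · rw [← h0]
      have h1 := l2_nonneg v
      have h2 : (0:ℝ) ≤ (Fintype.card (N ⋊[φ] H) : ℝ) := Nat.cast_nonneg _
      positivity
    · have hEig : Module.End.HasEigenvalue B ((lam : ℝ) : ℂ) := by
        have h := hB.hasEigenvalue_iSup_of_finiteDimensional
        rw [hlam]
        exact h
      set W := Module.End.eigenspace B ((lam : ℝ) : ℂ) with hWdef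
      have hWbot : W ≠ ⊥ := hEig
      haveI hWnt : Nontrivial ↥W := Submodule.nontrivial_iff_ne_bot.mpr hWbot
      have hAR : ∀ g : N ⋊[φ] H, A ∘ₗ Rlin g = Rlin g ∘ₗ A := fun g => convL_comm_Rlin v g
      have hadjAR : ∀ g : N ⋊[φ] H,
          (LinearMap.adjoint A) ∘ₗ Rlin g = Rlin g ∘ₗ (LinearMap.adjoint A) := by
        intro g
        have h1 := congrArg LinearMap.adjoint (hAR g⁻¹)
        rw [LinearMap.adjoint_comp, LinearMap.adjoint_comp, adjoint_Rlin, inv_inv] at h1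
        exact h1.symm
      have hBR : ∀ g : N ⋊[φ] H, ∀ w ∈ W, Rlin g w ∈ W := by
        intro g w hw
        rw [hWdef, Module.End.mem_eigenspace_iff] at hw ⊢
        have hc : B (Rlin g w) = Rlin g (B w) := by
          show (LinearMap.adjoint A) (A (Rlin g w)) = _
          have e1 : A (Rlin g w) = Rlin g (A w) := LinearMap.congr_fun (hAR g) w
          rw [e1]
          exact LinearMap.congr_fun (hadjAR g) (A w)
        rw [hc, hw, map_smul]
      let ρW : Representation ℂ (N ⋊[φ] H) ↥W := subRep rightRegRep W hBR
      obtain ⟨U, hUne, hUinv, hUmin⟩ := exists_min_invariant ρW hWnt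
      haveI hUnt : Nontrivial ↥U := Submodule.nontrivial_iff_ne_bot.mpr hUne
      have hirr := subRep_irred ρW U hUne hUinv hUmin
      have htype2 : ∃ z : N, (subRep ρW U hUinv) (inl z) ≠ 1 := by
        by_contra hcon
        push_neg at hcon
        obtain ⟨w0, hw0⟩ := exists_ne (0 : ↥U)
        set e : EuclideanSpace ℂ (N ⋊[φ] H) := (((w0 : ↥W) : EuclideanSpace ℂ (N ⋊[φ] H))) with he
        have hinv' : ∀ (x : N ⋊[φ] H) (z : N), e (x * inl z) = e x := by
          intro x z
          have hfix : (subRep ρW U hUinv (inl z)) w0 = w0 := by rw [hcon z]; rfl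
          have h1 : Rlin (inl z) e = e := by
            calc Rlin (inl z) e
                = ((((subRep ρW U hUinv (inl z) w0 : ↥U) : ↥W) :
                    EuclideanSpace ℂ (N ⋊[φ] H))) := rfl
              _ = e := by rw [hfix]
          exact congrFun (congrArg WithLp.ofLp h1) x
        have hAe : A e = 0 := by
            have h := conv_rinv_zero hv hinv'
            show WithLp.toLp 2 (conv v e.ofLp) = 0
            rw [h]
            rfl
        have hBe : B e = 0 := by
          show (LinearMap.adjoint A) (A e) = 0
          rw [hAe, map_zero]
        have heW : B e = ((lam : ℝ) : ℂ) • e :=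
          Module.End.mem_eigenspace_iff.mp (w0 : ↥W).prop
        rw [hBe] at heW
        have hlamne : ((lam : ℝ) : ℂ) ≠ 0 := by
          simpa using ne_of_gt hpos
        have he0 : e = 0 := by
          rcases smul_eq_zero.mp heW.symm with h | h
          · exact absurd h hlamne
          · exact h
        apply hw0
        have h4 : (w0 : ↥W) = 0 := by
          apply Subtype.ext
          exact he0
        exact Subtype.ext h4
      have hDle : D ≤ (Module.finrank ℂ ↥U : ℝ) := hqr ↥U (subRep ρW U hUinv) hirr htype2
      set m := Module.finrank ℂ ↥W with hm
      let b := stdOrthonormalBasis ℂ ↥W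
      have hbon : Orthonormal ℂ
          (fun i : Fin m => ((b i : ↥W) : EuclideanSpace ℂ (N ⋊[φ] H))) :=
        b.orthonormal.comp_linearIsometry W.subtypeₗᵢ
      have hsum := sum_l2_conv_le v _ hbon
      have heach' : ∀ i : Fin m,
          l2 (conv v (((b i : ↥W) : EuclideanSpace ℂ (N ⋊[φ] H)) : (N ⋊[φ] H) → ℂ)) = lam := by
        intro i
        set ei : EuclideanSpace ℂ (N ⋊[φ] H) := ((b i : ↥W) : EuclideanSpace ℂ (N ⋊[φ] H)) with hei
        have h1 : l2 (conv v (ei : (N ⋊[φ] H) → ℂ)) = ‖A ei‖ ^ 2 := (norm_sq_eq_l2 (A ei)).symm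
        have hmem : B ei = ((lam : ℝ) : ℂ) • ei := Module.End.mem_eigenspace_iff.mp (b i).prop
        have h2 : RCLike.re ⟪B ei, ei⟫ = lam * ‖ei‖ ^ 2 := by
          rw [hmem, inner_smul_left, inner_self_eq_norm_sq_to_K, Complex.conj_ofReal]
          rw [← RCLike.ofReal_pow]
          simp
          left
          norm_cast
        have h3 : ‖ei‖ = 1 := by
          have := b.orthonormal.1 i
          rwa [← Submodule.norm_coe] at this
        rw [h1, ← hBA, h2, h3]
        norm_num
      have hUleW : (Module.finrank ℂ ↥U : ℝ) ≤ (m : ℝ) := by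
        exact_mod_cast Submodule.finrank_le U
      have hkey : lam * m ≤ (Fintype.card (N ⋊[φ] H) : ℝ) * l2 v := by
        have : ∑ i : Fin m,
            l2 (conv v (((b i : ↥W) : EuclideanSpace ℂ (N ⋊[φ] H)) : (N ⋊[φ] H) → ℂ)) = m * lam := by
          rw [Finset.sum_congr rfl fun i _ => heach' i]
          rw [Finset.sum_const, Finset.card_univ, Fintype.card_fin, nsmul_eq_mul]
        rw [this] at hsum
        linarith
      rw [le_div_iff₀ hD]
      calc lam * D ≤ lam * m :=
            mul_le_mul_of_nonneg_left (hDle.trans hUleW) hlam_nonneg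
        _ ≤ _ := hkey
  let uE : EuclideanSpace ℂ (N ⋊[φ] H) := WithLp.toLp 2 u
  have e1 : l2 (conv v u) = ‖A uE‖ ^ 2 := (norm_sq_eq_l2 (A uE)).symm
  have e2 := hray uE
  have e3 : ‖uE‖ ^ 2 = l2 u := norm_sq_eq_l2 uE
  calc l2 (conv v u) = ‖A uE‖ ^ 2 := e1
    _ ≤ lam * ‖uE‖ ^ 2 := e2
    _ ≤ ((Fintype.card (N ⋊[φ] H) : ℝ) * l2 v / D) * ‖uE‖ ^ 2 :=
        mul_le_mul_of_nonneg_right hmain (sq_nonneg _)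
    _ = ((Fintype.card (N ⋊[φ] H) : ℝ) / D) * l2 v * l2 u := by rw [e3]; ring

end KeyLemma


section Assemble

open SemidirectProduct

variable {N H : Type} [Group N] [Group H] [Fintype N] [Fintype H] {φ : H →* MulAut N}
variable [DecidableEq (N ⋊[φ] H)] [DecidableEq H]

lemma list_prod_nonneg : ∀ l : List ℝ, (∀ a ∈ l, 0 ≤ a) → 0 ≤ l.prod := by
  intro l
  induction l with
  | nil => intro _; simp
  | cons a l ih =>
    intro h
    rw [List.prod_cons]
    exact mul_nonneg (h a List.mem_cons_self) (ih fun b hb => h b (List.mem_cons_of_mem a hb))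

lemma foldl_bound {D : ℝ} (hD : 0 < D) (hqr : QuasirandomOn φ D) :
    ∀ (l : List ((N ⋊[φ] H) → ℂ)) (w : (N ⋊[φ] H) → ℂ), Bal w →
      l2 (l.foldl conv w) ≤
        ((Fintype.card (N ⋊[φ] H) : ℝ) / D) ^ l.length * (l2 w * (l.map l2).prod) := by
  intro l
  induction l with
  | nil => intro w _; simp
  | cons g l ih =>
    intro w hw
    have h1 := ih (conv w g) (bal_conv hw g)
    simp only [List.foldl_cons, List.length_cons, List.map_cons, List.prod_cons]
    refine h1.trans ?_
    have h2 := lemL hD hqr hw g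
    have hc : (0:ℝ) ≤ (Fintype.card (N ⋊[φ] H) : ℝ) / D := by positivity
    have hP : (0:ℝ) ≤ (l.map l2).prod := by
      refine list_prod_nonneg _ ?_
      intro a ha
      obtain ⟨b, _, rfl⟩ := List.mem_map.mp ha
      exact l2_nonneg b
    calc ((Fintype.card (N ⋊[φ] H) : ℝ) / D) ^ l.length * (l2 (conv w g) * (l.map l2).prod)
        ≤ ((Fintype.card (N ⋊[φ] H) : ℝ) / D) ^ l.length *
            ((((Fintype.card (N ⋊[φ] H) : ℝ) / D) * l2 w * l2 g) * (l.map l2).prod) := by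
          refine mul_le_mul_of_nonneg_left ?_ (pow_nonneg hc _)
          exact mul_le_mul_of_nonneg_right h2 hP
      _ = ((Fintype.card (N ⋊[φ] H) : ℝ) / D) ^ (l.length + 1) *
            (l2 w * (l2 g * (l.map l2).prod)) := by ring

lemma nat_card_eq_sumC {α : Type} [Fintype α] (p : α → Prop) [DecidablePred p] :
    ((Nat.card {a : α // p a} : ℝ) : ℂ) = ∑ a : α, if p a then (1:ℂ) else 0 := by
  rw [Nat.card_eq_fintype_card, Fintype.card_subtype, Finset.card_filter]
  push_cast
  refine Finset.sum_congr rfl fun a _ => ?_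
  split <;> simp

lemma nat_card_eq_sumR {α : Type} [Fintype α] (p : α → Prop) [DecidablePred p] :
    ((Nat.card {a : α // p a} : ℝ)) = ∑ a : α, if p a then (1:ℝ) else 0 := by
  rw [Nat.card_eq_fintype_card, Fintype.card_subtype, Finset.card_filter]
  push_cast
  refine Finset.sum_congr rfl fun a _ => ?_
  split <;> simp

lemma l2_ind (X : Set (N ⋊[φ] H)) [DecidablePred (· ∈ X)] :
    l2 (fun x => if x ∈ X then (1:ℂ) else 0) = (Nat.card X : ℝ) := by
  unfold l2
  have h2 : ∀ x : N ⋊[φ] H, ‖if x ∈ X then (1:ℂ) else 0‖ ^ 2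
      = if x ∈ X then (1:ℝ) else 0 := by
    intro x; split <;> simp
  rw [Finset.sum_congr rfl fun x _ => h2 x]
  exact (nat_card_eq_sumR (fun a => a ∈ X)).symm

lemma prod_right {n : ℕ} (y : Fin n → N ⋊[φ] H) :
    (List.ofFn fun i => (y i).right).prod = ((List.ofFn y).prod).right := by
  have h1 : (List.ofFn fun i => (y i).right) = (List.ofFn y).map rightHom := by
    rw [List.map_ofFn]
    rfl
  rw [h1]
  exact List.prod_hom _ rightHom

end Assemble



end MixingAux

end MixingAux

open MixingAux SemidirectProduct in
set_option maxHeartbeats 1000000 in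
/-- **Theorem 1.4.** If `G = N ⋊[φ] H` is `D`-quasirandom on `N`, then for `k ≥ 2` and
`X₀, X₁, …, X_k ⊆ G`, the number `M_k` of tuples `(x₀,…,x_k) ∈ X₀ × ⋯ × X_k` with
`x₁x₂⋯x_k = x₀` satisfies
`|M_k - Ṁ_k/|N|| ≤ √(|G|^(k-1) |X₀||X₁|⋯|X_k| / D^(k-1))`,
where `Ṁ_k` counts tuples with `ẋ₁ẋ₂⋯ẋ_k = ẋ₀` in `H`. -/
theorem mixing_semidirect {N H : Type} [Group N] [Group H] [Fintype N] [Fintype H]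
    (φ : H →* MulAut N) (D : ℝ) (hD : 0 < D) (hqr : QuasirandomOn φ D)
    (k : ℕ) (hk : 2 ≤ k) (X : Fin (k + 1) → Set (N ⋊[φ] H)) :
    |(Nat.card {x : Fin (k + 1) → N ⋊[φ] H //
          (∀ i, x i ∈ X i) ∧ (List.ofFn fun i : Fin k => x i.succ).prod = x 0} : ℝ) -
        (Nat.card {x : Fin (k + 1) → N ⋊[φ] H //
          (∀ i, x i ∈ X i) ∧
            (List.ofFn fun i : Fin k => (x i.succ).right).prod = (x 0).right} : ℝ) /
          (Nat.card N : ℝ)| ≤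
      Real.sqrt ((Nat.card (N ⋊[φ] H) : ℝ) ^ (k - 1) *
        (∏ i, (Nat.card (X i) : ℝ)) / D ^ (k - 1)) := by
  classical
  obtain ⟨m, rfl⟩ : ∃ m, k = m + 1 := ⟨k - 1, by omega⟩
  let f : Fin (m + 1 + 1) → (N ⋊[φ] H) → ℂ := fun i x => if x ∈ X i then 1 else 0
  have f_def : ∀ i x, f i x = if x ∈ X i then (1:ℂ) else 0 := fun _ _ => rfl
  let FFr : (N ⋊[φ] H) → ℂ :=
    (List.ofFn fun j : Fin m => f j.succ.succ).foldr conv (dd (N ⋊[φ] H))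
  let fh : (N ⋊[φ] H) → ℂ := f ((0 : Fin (m + 1)).succ)
  let h1 : (N ⋊[φ] H) → ℂ := fh - Pav fh
  let FF : (N ⋊[φ] H) → ℂ :=
    (List.ofFn fun i : Fin (m + 1) => f i.succ).foldr conv (dd (N ⋊[φ] H))
  have hsplit : FF = conv fh FFr := by
    show (List.ofFn fun i : Fin (m + 1) => f i.succ).foldr conv (dd (N ⋊[φ] H)) = _
    rw [List.ofFn_succ]
    rfl
  have hsum2 : ∀ F : (Fin (m + 1 + 1) → N ⋊[φ] H) → ℂ,
      ∑ y : Fin (m + 1 + 1) → N ⋊[φ] H, F y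
        = ∑ p : (N ⋊[φ] H) × (Fin (m + 1) → N ⋊[φ] H),
            F (Fin.cons p.1 p.2 : Fin (m + 1 + 1) → N ⋊[φ] H) :=
    fun F => (Fintype.sum_bijective _
      (Fin.consEquiv (fun _ : Fin (m + 1 + 1) => N ⋊[φ] H)).bijective
      (fun p => F (Fin.cons p.1 p.2 : Fin (m + 1 + 1) → N ⋊[φ] H)) F (fun p => rfl)).symm
  -- the M identity
  have hM : ((Nat.card {x : Fin (m + 1 + 1) → N ⋊[φ] H //
        (∀ i, x i ∈ X i) ∧ (List.ofFn fun i : Fin (m + 1) => x i.succ).prod = x 0} : ℕ) : ℂ)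
      = ∑ x0 : N ⋊[φ] H, f 0 x0 * FF x0 := by
    have := nat_card_eq_sumC (fun x : Fin (m + 1 + 1) → N ⋊[φ] H =>
      (∀ i, x i ∈ X i) ∧ (List.ofFn fun i : Fin (m + 1) => x i.succ).prod = x 0)
    rw [show ((Nat.card {x : Fin (m + 1 + 1) → N ⋊[φ] H //
        (∀ i, x i ∈ X i) ∧ (List.ofFn fun i : Fin (m + 1) => x i.succ).prod = x 0} : ℕ) : ℂ)
      = (((Nat.card {x : Fin (m + 1 + 1) → N ⋊[φ] H //
        (∀ i, x i ∈ X i) ∧ (List.ofFn fun i : Fin (m + 1) => x i.succ).prod = x 0} : ℕ) : ℝ) : ℂ)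
      by push_cast; ring]
    rw [this]
    have step1 : ∀ x : Fin (m + 1 + 1) → N ⋊[φ] H,
        (if ((∀ i, x i ∈ X i) ∧ (List.ofFn fun i : Fin (m + 1) => x i.succ).prod = x 0)
          then (1:ℂ) else 0)
        = if (List.ofFn fun i : Fin (m + 1) => x i.succ).prod = x 0
            then ∏ i, f i (x i) else 0 := by
      intro x
      have hb : (∏ i, f i (x i)) = if (∀ i, x i ∈ X i) then (1:ℂ) else 0 := by
        by_cases hP : ∀ i, x i ∈ X i <;> simp [f_def, Fintype.prod_boole, hP]
      by_cases hp : (∀ i, x i ∈ X i) <;>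
        by_cases hq : ((List.ofFn fun i : Fin (m + 1) => x i.succ).prod = x 0) <;>
        simp [hp, hq, hb]
    rw [Finset.sum_congr rfl fun x _ => step1 x]
    rw [hsum2, Fintype.sum_prod_type]
    refine Finset.sum_congr rfl fun x0 _ => ?_
    rw [show FF x0 = ∑ y : Fin (m + 1) → N ⋊[φ] H,
        if (List.ofFn y).prod = x0 then ∏ i, f i.succ (y i) else 0
      from foldr_conv_apply _ _ x0]
    rw [Finset.mul_sum]
    refine Finset.sum_congr rfl fun y _ => ?_
    have e1 : (fun i : Fin (m + 1) => (Fin.cons x0 y : Fin (m + 1 + 1) → N ⋊[φ] H) i.succ) = y :=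
      funext fun i => Fin.cons_succ _ _ _
    have e2 : (Fin.cons x0 y : Fin (m + 1 + 1) → N ⋊[φ] H) 0 = x0 := Fin.cons_zero _ _
    have e3 : (∏ i, f i ((Fin.cons x0 y : Fin (m + 1 + 1) → N ⋊[φ] H) i))
        = f 0 x0 * ∏ i : Fin (m + 1), f i.succ (y i) := by
      rw [Fin.prod_univ_succ]
      simp
    rw [e1, e2, e3, mul_ite, mul_zero]
  -- the Ṁ identity
  have hMd : ((Nat.card {x : Fin (m + 1 + 1) → N ⋊[φ] H //
        (∀ i, x i ∈ X i) ∧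
          (List.ofFn fun i : Fin (m + 1) => (x i.succ).right).prod = (x 0).right} : ℕ) : ℂ)
      = ∑ x0 : N ⋊[φ] H, f 0 x0 * (∑ z : N, FF (inl z * x0)) := by
    have := nat_card_eq_sumC (fun x : Fin (m + 1 + 1) → N ⋊[φ] H =>
      (∀ i, x i ∈ X i) ∧
        (List.ofFn fun i : Fin (m + 1) => (x i.succ).right).prod = (x 0).right)
    rw [show ((Nat.card {x : Fin (m + 1 + 1) → N ⋊[φ] H //
        (∀ i, x i ∈ X i) ∧
          (List.ofFn fun i : Fin (m + 1) => (x i.succ).right).prod = (x 0).right} : ℕ) : ℂ)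
      = (((Nat.card {x : Fin (m + 1 + 1) → N ⋊[φ] H //
        (∀ i, x i ∈ X i) ∧
          (List.ofFn fun i : Fin (m + 1) => (x i.succ).right).prod = (x 0).right} : ℕ) : ℝ) : ℂ)
      by push_cast; ring]
    rw [this]
    have step1 : ∀ x : Fin (m + 1 + 1) → N ⋊[φ] H,
        (if ((∀ i, x i ∈ X i) ∧
            (List.ofFn fun i : Fin (m + 1) => (x i.succ).right).prod = (x 0).right)
          then (1:ℂ) else 0)
        = if (List.ofFn fun i : Fin (m + 1) => (x i.succ).right).prod = (x 0).right
            then ∏ i, f i (x i) else 0 := by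
      intro x
      have hb : (∏ i, f i (x i)) = if (∀ i, x i ∈ X i) then (1:ℂ) else 0 := by
        by_cases hP : ∀ i, x i ∈ X i <;> simp [f_def, Fintype.prod_boole, hP]
      by_cases hp : (∀ i, x i ∈ X i) <;>
        by_cases hq : ((List.ofFn fun i : Fin (m + 1) => (x i.succ).right).prod = (x 0).right) <;>
        simp [hp, hq, hb]
    rw [Finset.sum_congr rfl fun x _ => step1 x]
    rw [hsum2, Fintype.sum_prod_type]
    refine Finset.sum_congr rfl fun x0 _ => ?_
    calc ∑ y : Fin (m + 1) → N ⋊[φ] H,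
          (if (List.ofFn fun i : Fin (m + 1) =>
              ((Fin.cons x0 y : Fin (m + 1 + 1) → N ⋊[φ] H) i.succ).right).prod
            = ((Fin.cons x0 y : Fin (m + 1 + 1) → N ⋊[φ] H) 0).right
          then ∏ i, f i ((Fin.cons x0 y : Fin (m + 1 + 1) → N ⋊[φ] H) i) else 0)
        = ∑ y : Fin (m + 1) → N ⋊[φ] H,
            (if ((List.ofFn y).prod).right = x0.right
              then f 0 x0 * ∏ i : Fin (m + 1), f i.succ (y i) else 0) := by
          refine Finset.sum_congr rfl fun y _ => ?_
          have e1 : (fun i : Fin (m + 1) =>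
              ((Fin.cons x0 y : Fin (m + 1 + 1) → N ⋊[φ] H) i.succ).right)
              = fun i => (y i).right := funext fun i => by rw [Fin.cons_succ]
          have e2 : (Fin.cons x0 y : Fin (m + 1 + 1) → N ⋊[φ] H) 0 = x0 := Fin.cons_zero _ _
          have e3 : (∏ i, f i ((Fin.cons x0 y : Fin (m + 1 + 1) → N ⋊[φ] H) i))
              = f 0 x0 * ∏ i : Fin (m + 1), f i.succ (y i) := by
            rw [Fin.prod_univ_succ]
            simp
          rw [e1, e2, e3, prod_right y]
      _ = ∑ y : Fin (m + 1) → N ⋊[φ] H, ∑ z : N,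
            (if (List.ofFn y).prod = inl z * x0
              then f 0 x0 * ∏ i : Fin (m + 1), f i.succ (y i) else 0) := by
          refine Finset.sum_congr rfl fun y _ => ite_right_split _ _ _
      _ = ∑ z : N, ∑ y : Fin (m + 1) → N ⋊[φ] H,
            (if (List.ofFn y).prod = inl z * x0
              then f 0 x0 * ∏ i : Fin (m + 1), f i.succ (y i) else 0) := Finset.sum_comm
      _ = ∑ z : N, f 0 x0 * FF (inl z * x0) := by
          refine Finset.sum_congr rfl fun z _ => ?_
          rw [show FF (inl z * x0) = ∑ y : Fin (m + 1) → N ⋊[φ] H,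
              if (List.ofFn y).prod = inl z * x0 then ∏ i, f i.succ (y i) else 0
            from foldr_conv_apply _ _ _]
          rw [Finset.mul_sum]
          refine Finset.sum_congr rfl fun y _ => ?_
          rw [mul_ite, mul_zero]
      _ = f 0 x0 * ∑ z : N, FF (inl z * x0) := (Finset.mul_sum _ _ _).symm
  -- decomposition
  have hdecomp : FF - Pav FF = conv h1 FFr := by
    rw [hsplit, Pav_conv, ← conv_sub_left]
  -- the key absolute-value identity
  have key : |(Nat.card {x : Fin (m + 1 + 1) → N ⋊[φ] H //
        (∀ i, x i ∈ X i) ∧ (List.ofFn fun i : Fin (m + 1) => x i.succ).prod = x 0} : ℝ) -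
      (Nat.card {x : Fin (m + 1 + 1) → N ⋊[φ] H //
        (∀ i, x i ∈ X i) ∧
          (List.ofFn fun i : Fin (m + 1) => (x i.succ).right).prod = (x 0).right} : ℝ) /
        (Nat.card N : ℝ)|
      = ‖∑ x0 : N ⋊[φ] H, f 0 x0 * conv h1 FFr x0‖ := by
    set r : ℝ := (Nat.card {x : Fin (m + 1 + 1) → N ⋊[φ] H //
        (∀ i, x i ∈ X i) ∧ (List.ofFn fun i : Fin (m + 1) => x i.succ).prod = x 0} : ℝ) -
      (Nat.card {x : Fin (m + 1 + 1) → N ⋊[φ] H //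
        (∀ i, x i ∈ X i) ∧
          (List.ofFn fun i : Fin (m + 1) => (x i.succ).right).prod = (x 0).right} : ℝ) /
        (Nat.card N : ℝ) with hr
    have hrc : ((r : ℝ) : ℂ) = ∑ x0 : N ⋊[φ] H, f 0 x0 * conv h1 FFr x0 := by
      rw [hr]
      push_cast
      rw [hM, hMd]
      rw [Nat.card_eq_fintype_card (α := N)]
      rw [Finset.sum_div, ← Finset.sum_sub_distrib]
      refine Finset.sum_congr rfl fun x0 _ => ?_
      have hc' : FF x0 - Pav FF x0 = conv h1 FFr x0 := congrFun hdecomp x0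
      have hP : Pav FF x0 = (∑ z : N, FF (inl z * x0)) / (Fintype.card N : ℂ) := rfl
      rw [← hc', hP]
      ring
    calc |r| = ‖((r : ℝ) : ℂ)‖ := by rw [Complex.norm_real, Real.norm_eq_abs]
      _ = _ := by rw [hrc]
  rw [key]
  simp only [Nat.add_sub_cancel]
  -- numeric estimates
  have hl2i : ∀ i, l2 (f i) = (Nat.card (X i) : ℝ) := fun i => l2_ind (X i)
  have hh1 : l2 h1 ≤ (Nat.card (X ((0 : Fin (m + 1)).succ)) : ℝ) := by
    rw [← hl2i]
    exact l2_sub_Pav_le fh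
  have hTfold : conv h1 FFr = List.foldl conv h1 (List.ofFn fun j : Fin m => f j.succ.succ) :=
    conv_foldr_eq_foldl _ _
  have hfold := foldl_bound hD hqr (List.ofFn fun j : Fin m => f j.succ.succ) h1 (bal_sub_Pav fh)
  have hprodl : (((List.ofFn fun j : Fin m => f j.succ.succ).map l2)).prod
      = ∏ j : Fin m, (Nat.card (X j.succ.succ) : ℝ) := by
    rw [List.map_ofFn, List.prod_ofFn]
    exact Finset.prod_congr rfl fun j _ => hl2i _
  rw [List.length_ofFn, hprodl] at hfold
  have hPn : (0:ℝ) ≤ ∏ j : Fin m, (Nat.card (X j.succ.succ) : ℝ) :=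
    Finset.prod_nonneg fun j _ => Nat.cast_nonneg _
  have hqn : (0:ℝ) ≤ ((Fintype.card (N ⋊[φ] H) : ℝ) / D) ^ m := by positivity
  have hTle : l2 (conv h1 FFr) ≤ ((Fintype.card (N ⋊[φ] H) : ℝ) / D) ^ m *
      ((Nat.card (X ((0 : Fin (m + 1)).succ)) : ℝ) *
        ∏ j : Fin m, (Nat.card (X j.succ.succ) : ℝ)) := by
    rw [hTfold]
    refine hfold.trans ?_
    refine mul_le_mul_of_nonneg_left ?_ hqn
    exact mul_le_mul_of_nonneg_right hh1 hPn
  calc ‖∑ x0 : N ⋊[φ] H, f 0 x0 * conv h1 FFr x0‖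
      ≤ Real.sqrt (l2 (f 0)) * Real.sqrt (l2 (conv h1 FFr)) := abs_sum_le_sqrt _ _
    _ ≤ Real.sqrt ((Nat.card (X 0) : ℝ)) *
        Real.sqrt (((Fintype.card (N ⋊[φ] H) : ℝ) / D) ^ m *
          ((Nat.card (X ((0 : Fin (m + 1)).succ)) : ℝ) *
            ∏ j : Fin m, (Nat.card (X j.succ.succ) : ℝ))) := by
        rw [hl2i 0]
        exact mul_le_mul_of_nonneg_left (Real.sqrt_le_sqrt hTle) (Real.sqrt_nonneg _)
    _ = Real.sqrt ((Nat.card (X 0) : ℝ) * (((Fintype.card (N ⋊[φ] H) : ℝ) / D) ^ m *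
          ((Nat.card (X ((0 : Fin (m + 1)).succ)) : ℝ) *
            ∏ j : Fin m, (Nat.card (X j.succ.succ) : ℝ)))) :=
        (Real.sqrt_mul (Nat.cast_nonneg _) _).symm
    _ = Real.sqrt ((Nat.card (N ⋊[φ] H) : ℝ) ^ m *
        (∏ i, (Nat.card (X i) : ℝ)) / D ^ m) := by
        congr 1
        have hsplitprod : (∏ i : Fin (m + 1 + 1), (Nat.card (X i) : ℝ))
            = (Nat.card (X 0) : ℝ) * ((Nat.card (X ((0 : Fin (m + 1)).succ)) : ℝ) *
              ∏ j : Fin m, (Nat.card (X j.succ.succ) : ℝ)) := by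
          rw [Fin.prod_univ_succ, Fin.prod_univ_succ]
        rw [hsplitprod, Nat.card_eq_fintype_card (α := N ⋊[φ] H), div_pow]
        ring
end

section
/- For all subsets X, Y, Z of G₀ = 𝔽_q² ⋊ SO₂(𝔽_q), one has |#{(x,y,z) ∈ X×Y×Z : xy = z} − Ṁ₂/q²| ≤ q·√(|X||Y||Z|), where Ṁ₂ = #{(x,y,z) ∈ X×Y×Z : ẋẏ = ż}. -/
open Matrix

/-- The special orthogonal group `SO₂` over a field `F`, i.e. the rotation matrices
`!![a, -b; b, a]` with `a² + b² = 1`, as a subgroup of the units of `2×2` matrices. -/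
def SO2 (F : Type) [Field F] : Subgroup (Matrix (Fin 2) (Fin 2) F)ˣ where
  carrier := {h | ∃ a b : F, a ^ 2 + b ^ 2 = 1 ∧
    (h : Matrix (Fin 2) (Fin 2) F) = !![a, -b; b, a]}
  one_mem' := ⟨1, 0, by ring, by simp [Matrix.one_fin_two]⟩
  mul_mem' := by
    rintro x y ⟨a, b, hab, hx⟩ ⟨c, d, hcd, hy⟩
    refine ⟨a * c - b * d, a * d + b * c, ?_, ?_⟩
    · have h : (a * c - b * d) ^ 2 + (a * d + b * c) ^ 2
        = (a ^ 2 + b ^ 2) * (c ^ 2 + d ^ 2) := by ring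
      rw [h, hab, hcd, one_mul]
    · rw [Units.val_mul, hx, hy, Matrix.mul_fin_two]
      congr 1 <;> ring
  inv_mem' := by
    rintro x ⟨a, b, hab, hx⟩
    refine ⟨a, -b, by rw [neg_sq]; exact hab, ?_⟩
    have hmul : (x : Matrix (Fin 2) (Fin 2) F) * !![a, - -b; -b, a] = 1 := by
      rw [hx]
      ext i j
      fin_cases i <;> fin_cases j <;>
        simp [Matrix.mul_apply, Fin.sum_univ_two, Matrix.one_apply] <;>
        (first
          | ring1
          | linear_combination hab
          | linear_combination -hab)
    calc (↑x⁻¹ : Matrix (Fin 2) (Fin 2) F)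
        = ↑x⁻¹ * ((x : Matrix (Fin 2) (Fin 2) F) * !![a, - -b; -b, a]) := by
          rw [hmul, mul_one]
      _ = (↑x⁻¹ * (x : Matrix (Fin 2) (Fin 2) F)) * !![a, - -b; -b, a] := by
          rw [mul_assoc]
      _ = !![a, - -b; -b, a] := by rw [Units.inv_mul, one_mul]

/-- The matrix of an element of `SO₂`. -/
def SO2.mat {F : Type} [Field F] (h : SO2 F) : Matrix (Fin 2) (Fin 2) F :=
  ((h : (Matrix (Fin 2) (Fin 2) F)ˣ) : Matrix (Fin 2) (Fin 2) F)

lemma SO2.mat_inv_mul {F : Type} [Field F] (h : SO2 F) : SO2.mat h⁻¹ * SO2.mat h = 1 := by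
  simp only [SO2.mat, InvMemClass.coe_inv, Units.inv_mul]

lemma SO2.mat_mul_inv {F : Type} [Field F] (h : SO2 F) : SO2.mat h * SO2.mat h⁻¹ = 1 := by
  simp only [SO2.mat, InvMemClass.coe_inv, Units.mul_inv]

lemma SO2.mat_mul {F : Type} [Field F] (h₁ h₂ : SO2 F) :
    SO2.mat (h₁ * h₂) = SO2.mat h₁ * SO2.mat h₂ := by
  simp only [SO2.mat, MulMemClass.coe_mul, Units.val_mul]

lemma SO2.mat_one {F : Type} [Field F] : SO2.mat (1 : SO2 F) = 1 := by
  simp only [SO2.mat, OneMemClass.coe_one, Units.val_one]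

/-- The action of `SO₂(F)` on `F²` by matrix-vector multiplication, as a homomorphism
into the automorphisms of the (multiplicative version of the) additive group `F²`. -/
def rotHom (F : Type) [Field F] : SO2 F →* MulAut (Multiplicative (Fin 2 → F)) where
  toFun h :=
    { toFun := fun v => Multiplicative.ofAdd ((SO2.mat h).mulVec v.toAdd)
      invFun := fun v => Multiplicative.ofAdd ((SO2.mat h⁻¹).mulVec v.toAdd)
      left_inv := fun v => by
        simp only [toAdd_ofAdd, Matrix.mulVec_mulVec, SO2.mat_inv_mul,
          Matrix.one_mulVec, ofAdd_toAdd]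
      right_inv := fun v => by
        simp only [toAdd_ofAdd, Matrix.mulVec_mulVec, SO2.mat_mul_inv,
          Matrix.one_mulVec, ofAdd_toAdd]
      map_mul' := fun u v => by
        simp only [toAdd_mul, Matrix.mulVec_add, ofAdd_add] }
  map_one' := by
    ext v
    simp [SO2.mat_one, Matrix.one_mulVec]
  map_mul' h₁ h₂ := by
    ext v
    simp only [MulEquiv.coe_mk, Equiv.coe_fn_mk, MulAut.mul_apply, toAdd_ofAdd,
      Matrix.mulVec_mulVec, SO2.mat_mul]

/-- The group `G₀ = F² ⋊ SO₂(F)` of rigid motions of the plane `F²`. -/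
abbrev G0 (F : Type) [Field F] : Type :=
  Multiplicative (Fin 2 → F) ⋊[rotHom F] SO2 F

instance {N H : Type*} [Group N] [Group H] {φ : H →* MulAut N} [Finite N] [Finite H] :
    Finite (N ⋊[φ] H) :=
  Finite.of_injective (fun g => (g.left, g.right))
    (by rintro ⟨a, b⟩ ⟨c, d⟩ h
        simp only [Prod.mk.injEq] at h
        simp [h.1, h.2])

namespace MixAux

open Finset

variable {F : Type} [Field F] [Fintype F]

/-- Build an element of `G0 F` from components. -/
def toG (u : Fin 2 → F) (h : SO2 F) : G0 F := ⟨Multiplicative.ofAdd u, h⟩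

lemma toG_mul (u v : Fin 2 → F) (h k : SO2 F) :
    toG u h * toG v k = toG (u + (SO2.mat h).mulVec v) (h * k) := rfl

lemma toG_right (u : Fin 2 → F) (h : SO2 F) : (toG u h).right = h := rfl

/-- `G0 F` is just a product as a type. -/
def gEquiv (F : Type) [Field F] : ((Fin 2 → F) × SO2 F) ≃ G0 F where
  toFun p := toG p.1 p.2
  invFun g := (Multiplicative.toAdd g.left, g.right)
  left_inv p := rfl
  right_inv g := rfl

lemma sum_G0 {M : Type*} [AddCommMonoid M] [Fintype (SO2 F)] [Fintype (G0 F)]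
    (f : G0 F → M) :
    ∑ g : G0 F, f g = ∑ h : SO2 F, ∑ u : Fin 2 → F, f (toG u h) := by
  rw [← Equiv.sum_comp (gEquiv F) f, Fintype.sum_prod_type, Finset.sum_comm]
  rfl

/-- The (right) action of `SO2 F` on additive characters of `F²`. -/
def chRot (g : SO2 F) (ψ : AddChar (Fin 2 → F) ℂ) : AddChar (Fin 2 → F) ℂ :=
  ψ.compAddMonoidHom (Matrix.mulVecLin (SO2.mat g)).toAddMonoidHom

lemma chRot_apply (g : SO2 F) (ψ : AddChar (Fin 2 → F) ℂ) (v : Fin 2 → F) :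
    chRot g ψ v = ψ ((SO2.mat g).mulVec v) := rfl

lemma chRot_chRot (g h : SO2 F) (ψ : AddChar (Fin 2 → F) ℂ) :
    chRot h (chRot g ψ) = chRot (g * h) ψ := by
  ext v
  simp only [chRot_apply, SO2.mat_mul, Matrix.mulVec_mulVec]

lemma chRot_one (ψ : AddChar (Fin 2 → F) ℂ) : chRot 1 ψ = ψ := by
  ext v
  simp [chRot_apply, SO2.mat_one, Matrix.one_mulVec]

lemma chRot_inv_chRot (g : SO2 F) (ψ : AddChar (Fin 2 → F) ℂ) :
    chRot g⁻¹ (chRot g ψ) = ψ := by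
  rw [chRot_chRot, mul_inv_cancel, chRot_one]

lemma chRot_chRot_inv (g : SO2 F) (ψ : AddChar (Fin 2 → F) ℂ) :
    chRot g (chRot g⁻¹ ψ) = ψ := by
  rw [chRot_chRot, inv_mul_cancel, chRot_one]

lemma chRot_injective (g : SO2 F) : Function.Injective (chRot g) := by
  intro ψ χ e
  have := congrArg (chRot g⁻¹) e
  rwa [chRot_inv_chRot, chRot_inv_chRot] at this

lemma chRot_bijective (g : SO2 F) : Function.Bijective (chRot g) :=
  ⟨chRot_injective g, fun χ => ⟨chRot g⁻¹ χ, chRot_chRot_inv g χ⟩⟩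

/-- `chRot g` as an equivalence. -/
noncomputable def chRotEquiv (g : SO2 F) : AddChar (Fin 2 → F) ℂ ≃ AddChar (Fin 2 → F) ℂ :=
  Equiv.ofBijective _ (chRot_bijective g)

lemma chRotEquiv_apply (g : SO2 F) (ψ : AddChar (Fin 2 → F) ℂ) :
    chRotEquiv g ψ = chRot g ψ := rfl

lemma chRot_zero (g : SO2 F) : chRot g (0 : AddChar (Fin 2 → F) ℂ) = 0 := by
  ext v
  simp [chRot_apply]

lemma chRot_eq_zero_iff (g : SO2 F) (ψ : AddChar (Fin 2 → F) ℂ) :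
    chRot g ψ = 0 ↔ ψ = 0 :=
  ⟨fun e => chRot_injective g (by rw [e, chRot_zero]), fun e => by rw [e, chRot_zero]⟩

lemma two_ne_zero_of_odd_card (hodd : Odd (Fintype.card F)) : (2 : F) ≠ 0 := by
  intro h2
  have hdvd : addOrderOf (1 : F) ∣ 2 := addOrderOf_dvd_of_nsmul_eq_zero (by
    rw [two_smul, one_add_one_eq_two, h2])
  have hne1 : addOrderOf (1 : F) ≠ 1 := by
    simp only [ne_eq, AddMonoid.addOrderOf_eq_one_iff]
    exact one_ne_zero
  have h2' : addOrderOf (1 : F) = 2 := by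
    rcases (Nat.prime_two).eq_one_or_self_of_dvd _ hdvd with h | h
    · exact absurd h hne1
    · exact h
  have : (2 : ℕ) ∣ Fintype.card F := h2' ▸ addOrderOf_dvd_card
  rw [← Nat.not_even_iff_odd] at hodd
  exact hodd (even_iff_two_dvd.mpr this)

lemma chRot_fixed_eq_one (h2 : (2 : F) ≠ 0) {g : SO2 F} {ψ : AddChar (Fin 2 → F) ℂ}
    (hψ : ψ ≠ 0) (hfix : chRot g ψ = ψ) : g = 1 := by
  by_contra hg
  obtain ⟨a, b, hab, hmat⟩ := g.2
  have hmat' : SO2.mat g = !![a, -b; b, a] := hmat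
  have ha : a ≠ 1 := by
    rintro rfl
    have hb : b = 0 := by
      have hb2 : b ^ 2 = 0 := by linear_combination hab
      exact pow_eq_zero_iff (by norm_num : (2:ℕ) ≠ 0) |>.mp hb2
    apply hg
    have h1 : SO2.mat g = 1 := by
      rw [hmat', hb, Matrix.one_fin_two]
      norm_num
    exact Subtype.ext (Units.ext h1)
  set M : Matrix (Fin 2) (Fin 2) F := SO2.mat g - 1 with hM
  have hMval : M = !![a - 1, -b; b, a - 1] := by
    rw [hM, hmat', Matrix.one_fin_two]
    ext i j
    fin_cases i <;> fin_cases j <;> simp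
  have hdet : M.det = 2 - 2 * a := by
    rw [hMval, Matrix.det_fin_two_of]
    linear_combination hab
  have hdetne : M.det ≠ 0 := by
    rw [hdet]
    intro h
    have h' : (2 : F) * (1 - a) = 0 := by linear_combination h
    rcases mul_eq_zero.mp h' with h'' | h''
    · exact h2 h''
    · exact ha (sub_eq_zero.mp h'').symm
  apply hψ
  ext w
  rw [AddChar.zero_apply]
  obtain ⟨v, hvw⟩ : ∃ v, M.mulVec v = w :=
    ⟨M⁻¹.mulVec w, by
      rw [Matrix.mulVec_mulVec, Matrix.mul_nonsing_inv _ (Ne.isUnit hdetne), Matrix.one_mulVec]⟩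
  have h1 : (SO2.mat g).mulVec v - v = w := by
    rw [← hvw, hM, Matrix.sub_mulVec, Matrix.one_mulVec]
  have hfixv : ψ ((SO2.mat g).mulVec v) = ψ v := by
    have := DFunLike.congr_fun hfix v
    rwa [chRot_apply] at this
  have hvne : ψ v ≠ 0 := by
    intro h0
    have : ψ v * ψ (-v) = 1 := by
      rw [← AddChar.map_add_eq_mul, add_neg_cancel, AddChar.map_zero_eq_one]
    rw [h0, zero_mul] at this
    exact zero_ne_one this
  calc ψ w = ψ ((SO2.mat g).mulVec v + -v) := by rw [← h1, sub_eq_add_neg]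
    _ = ψ ((SO2.mat g).mulVec v) * ψ (-v) := AddChar.map_add_eq_mul ψ _ _
    _ = ψ v * (ψ v)⁻¹ := by rw [hfixv, AddChar.map_neg_eq_inv]
    _ = 1 := mul_inv_cancel₀ hvne

end MixAux
namespace MixAux

variable {F : Type} [Field F] [Fintype F]

open Finset

open scoped Classical in
/-- The fiber of `S` over `h`. -/
noncomputable def US (S : Set (G0 F)) (h : SO2 F) : Finset (Fin 2 → F) :=
  Finset.univ.filter fun u => toG u h ∈ S

/-- Fourier coefficient of a fiber of `S`. -/
noncomputable def Wt (S : Set (G0 F)) (h : SO2 F) (ψ : AddChar (Fin 2 → F) ℂ) : ℂ :=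
  ∑ u ∈ US S h, ψ u

lemma nat_card_subtype {α : Type*} [Fintype α] (p : α → Prop) [DecidablePred p] :
    Nat.card {x // p x} = ∑ x : α, if p x then 1 else 0 := by
  rw [Nat.card_eq_fintype_card, Fintype.card_subtype, Finset.card_filter]

lemma card_set_eq [Fintype (SO2 F)] [Fintype (G0 F)] (S : Set (G0 F)) :
    (Nat.card S : ℝ) = ∑ h : SO2 F, ((US S h).card : ℝ) := by
  classical
  have h1 : Nat.card S = ∑ h : SO2 F, (US S h).card := by
    rw [show (Nat.card S) = Nat.card {g : G0 F // g ∈ S} from rfl,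
      nat_card_subtype, sum_G0]
    refine Finset.sum_congr rfl fun h _ => ?_
    rw [US, Finset.card_filter]
  rw [h1]
  push_cast
  rfl

lemma parseval_c (S : Set (G0 F)) (h : SO2 F) :
    ∑ ψ : AddChar (Fin 2 → F) ℂ, Wt S h ψ * (starRingEnd ℂ) (Wt S h ψ)
      = (Fintype.card (Fin 2 → F) : ℂ) * (US S h).card := by
  classical
  have step1 : ∀ ψ : AddChar (Fin 2 → F) ℂ,
      Wt S h ψ * (starRingEnd ℂ) (Wt S h ψ)
        = ∑ u ∈ US S h, ∑ u' ∈ US S h, ψ (u - u') := by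
    intro ψ
    rw [Wt, map_sum, Finset.sum_mul_sum]
    exact Finset.sum_congr rfl fun u _ => Finset.sum_congr rfl fun u' _ => by
      rw [← AddChar.map_neg_eq_conj, ← AddChar.map_add_eq_mul, ← sub_eq_add_neg]
  simp only [step1]
  rw [Finset.sum_comm]
  have step2 : ∀ u ∈ US S h,
      (∑ ψ : AddChar (Fin 2 → F) ℂ, ∑ u' ∈ US S h, ψ (u - u'))
        = (Fintype.card (Fin 2 → F) : ℂ) := by
    intro u hu
    rw [Finset.sum_comm]
    have : ∀ u' : Fin 2 → F, (∑ ψ : AddChar (Fin 2 → F) ℂ, ψ (u - u'))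
        = if u = u' then (Fintype.card (Fin 2 → F) : ℂ) else 0 := by
      intro u'
      rw [AddChar.sum_apply_eq_ite]
      simp only [sub_eq_zero]
    simp only [this]
    rw [Finset.sum_ite_eq (US S h) u fun _ => (Fintype.card (Fin 2 → F) : ℂ), if_pos hu]
  calc ∑ u ∈ US S h, ∑ ψ : AddChar (Fin 2 → F) ℂ, ∑ u' ∈ US S h, ψ (u - u')
      = ∑ _u ∈ US S h, (Fintype.card (Fin 2 → F) : ℂ) := Finset.sum_congr rfl step2
    _ = (Fintype.card (Fin 2 → F) : ℂ) * (US S h).card := by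
        rw [Finset.sum_const, nsmul_eq_mul, mul_comm]
  -- note: we used sum_comm once; inner swap handled by step2's statement shape

lemma parseval (S : Set (G0 F)) (h : SO2 F) :
    ∑ ψ : AddChar (Fin 2 → F) ℂ, ‖Wt S h ψ‖ ^ 2
      = (Fintype.card (Fin 2 → F) : ℝ) * (US S h).card := by
  have h1 : ((∑ ψ : AddChar (Fin 2 → F) ℂ, ‖Wt S h ψ‖ ^ 2 : ℝ) : ℂ)
      = ((Fintype.card (Fin 2 → F) : ℝ) * ((US S h).card : ℝ) : ℂ) := by
    push_cast
    rw [← parseval_c S h]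
    exact Finset.sum_congr rfl fun ψ _ => by rw [RCLike.mul_conj]; norm_num
  exact_mod_cast h1

end MixAux
namespace MixAux

variable {F : Type} [Field F] [Fintype F]

open Finset

lemma sum_ite_and_three {α β γ : Type*} [Fintype α] [Fintype β] [Fintype γ]
    (A : α → Prop) (B : β → Prop) (C : γ → Prop)
    [DecidablePred A] [DecidablePred B] [DecidablePred C] :
    ∑ u : α, ∑ v : β, ∑ w : γ, (if A u ∧ B v ∧ C w then (1 : ℂ) else 0)
      = (∑ u : α, if A u then (1 : ℂ) else 0) * (∑ v : β, if B v then (1 : ℂ) else 0)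
        * (∑ w : γ, if C w then (1 : ℂ) else 0) := by
  have inner2 : ∀ v : β, (∑ w : γ, if B v ∧ C w then (1 : ℂ) else 0)
      = (if B v then (1 : ℂ) else 0) * ∑ w : γ, (if C w then (1 : ℂ) else 0) := by
    intro v
    by_cases hB : B v
    · simp [hB]
    · simp [hB]
  have inner1 : ∀ u : α, (∑ v : β, ∑ w : γ, if A u ∧ B v ∧ C w then (1 : ℂ) else 0)
      = (if A u then (1 : ℂ) else 0) *
        ((∑ v : β, if B v then (1 : ℂ) else 0) * ∑ w : γ, (if C w then (1 : ℂ) else 0)) := by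
    intro u
    by_cases hA : A u
    · simp only [hA, true_and, if_true, one_mul]
      simp only [inner2]
      rw [← Finset.sum_mul]
    · simp [hA]
  simp only [inner1]
  rw [← Finset.sum_mul]
  ring

open scoped Classical in
lemma M_eq [Fintype (SO2 F)] [Fintype (G0 F)] (X Y Z : Set (G0 F)) :
    ((Nat.card {p : G0 F × G0 F × G0 F //
        p.1 ∈ X ∧ p.2.1 ∈ Y ∧ p.2.2 ∈ Z ∧ p.1 * p.2.1 = p.2.2}) : ℂ)
      = ∑ h : SO2 F, ∑ k : SO2 F, ∑ u ∈ US X h, ∑ v ∈ US Y k,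
          (if u + (SO2.mat h).mulVec v ∈ US Z (h * k) then (1 : ℂ) else 0) := by
  have e3 : {p : G0 F × G0 F × G0 F //
        p.1 ∈ X ∧ p.2.1 ∈ Y ∧ p.2.2 ∈ Z ∧ p.1 * p.2.1 = p.2.2}
      ≃ {p : G0 F × G0 F // p.1 ∈ X ∧ p.2 ∈ Y ∧ p.1 * p.2 ∈ Z} :=
    { toFun := fun p => ⟨(p.1.1, p.1.2.1), p.2.1, p.2.2.1, by
        rw [p.2.2.2.2]; exact p.2.2.2.1⟩
      invFun := fun p => ⟨(p.1.1, p.1.2, p.1.1 * p.1.2), p.2.1, p.2.2.1, p.2.2.2, rfl⟩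
      left_inv := fun p => by
        obtain ⟨⟨x, y, z⟩, hx, hy, hz, hxy⟩ := p
        exact Subtype.ext (by simp [hxy])
      right_inv := fun p => rfl }
  rw [Nat.card_congr e3, nat_card_subtype]
  push_cast [apply_ite (fun n : ℕ => (n : ℂ))]
  rw [Fintype.sum_prod_type]
  rw [sum_G0 (f := fun x : G0 F => ∑ y : G0 F,
    (if x ∈ X ∧ y ∈ Y ∧ x * y ∈ Z then (1 : ℂ) else 0))]
  refine Finset.sum_congr rfl fun h _ => ?_
  have inner : ∀ u : Fin 2 → F,
      (∑ y : G0 F, if toG u h ∈ X ∧ y ∈ Y ∧ toG u h * y ∈ Z then (1 : ℂ) else 0)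
        = ∑ k : SO2 F, ∑ v : Fin 2 → F,
            (if toG u h ∈ X ∧ toG v k ∈ Y ∧
              toG (u + (SO2.mat h).mulVec v) (h * k) ∈ Z then (1 : ℂ) else 0) := by
    intro u
    rw [sum_G0]
    exact Finset.sum_congr rfl fun k _ => Finset.sum_congr rfl fun v _ => by
      rw [← toG_mul]
  simp only [inner]
  rw [Finset.sum_comm]
  refine Finset.sum_congr rfl fun k _ => ?_
  simp only [US, Finset.sum_filter, Finset.mem_filter, Finset.mem_univ, true_and, ite_and]
  refine Finset.sum_congr rfl fun u _ => ?_
  by_cases hA : toG u h ∈ X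
  · simp only [hA, if_true]
  · simp only [hA, if_false, Finset.sum_const_zero]

open scoped Classical in
lemma M2_eq [Fintype (SO2 F)] [Fintype (G0 F)] (X Y Z : Set (G0 F)) :
    ((Nat.card {p : G0 F × G0 F × G0 F //
        p.1 ∈ X ∧ p.2.1 ∈ Y ∧ p.2.2 ∈ Z ∧ p.1.right * p.2.1.right = p.2.2.right}) : ℂ)
      = ∑ h : SO2 F, ∑ k : SO2 F,
          ((US X h).card : ℂ) * ((US Y k).card : ℂ) * ((US Z (h * k)).card : ℂ) := by
  rw [nat_card_subtype]
  push_cast [apply_ite (fun n : ℕ => (n : ℂ))]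
  rw [Fintype.sum_prod_type]
  rw [sum_G0 (f := fun x : G0 F => ∑ y : G0 F × G0 F,
    (if x ∈ X ∧ y.1 ∈ Y ∧ y.2 ∈ Z ∧ x.right * y.1.right = y.2.right then (1 : ℂ) else 0))]
  refine Finset.sum_congr rfl fun h _ => ?_
  have inner : ∀ u : Fin 2 → F,
      (∑ y : G0 F × G0 F, if toG u h ∈ X ∧ y.1 ∈ Y ∧ y.2 ∈ Z ∧
          (toG u h).right * y.1.right = y.2.right then (1 : ℂ) else 0)
        = ∑ k : SO2 F, ∑ v : Fin 2 → F, ∑ l : SO2 F, ∑ w : Fin 2 → F,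
            (if toG u h ∈ X ∧ toG v k ∈ Y ∧ toG w l ∈ Z ∧ h * k = l
              then (1 : ℂ) else 0) := by
    intro u
    rw [Fintype.sum_prod_type]
    rw [sum_G0 (f := fun y : G0 F => ∑ z : G0 F,
      (if toG u h ∈ X ∧ y ∈ Y ∧ z ∈ Z ∧ (toG u h).right * y.right = z.right
        then (1 : ℂ) else 0))]
    refine Finset.sum_congr rfl fun k _ => Finset.sum_congr rfl fun v _ => ?_
    rw [sum_G0 (f := fun z : G0 F =>
      (if toG u h ∈ X ∧ toG v k ∈ Y ∧ z ∈ Z ∧ (toG u h).right * (toG v k).right = z.right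
        then (1 : ℂ) else 0))]
    exact Finset.sum_congr rfl fun l _ => Finset.sum_congr rfl fun w _ => by
      rw [toG_right, toG_right, toG_right]
  simp only [inner]
  rw [Finset.sum_comm]
  refine Finset.sum_congr rfl fun k _ => ?_
  have hcol : ∀ (u v : Fin 2 → F),
      (∑ l : SO2 F, ∑ w : Fin 2 → F,
        (if toG u h ∈ X ∧ toG v k ∈ Y ∧ toG w l ∈ Z ∧ h * k = l then (1 : ℂ) else 0))
      = ∑ w : Fin 2 → F,
          (if toG u h ∈ X ∧ toG v k ∈ Y ∧ toG w (h * k) ∈ Z then (1 : ℂ) else 0) := by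
    intro u v
    rw [Finset.sum_eq_single (h * k)]
    · refine Finset.sum_congr rfl fun w _ => ?_
      by_cases hc : toG u h ∈ X ∧ toG v k ∈ Y ∧ toG w (h * k) ∈ Z
      · rw [if_pos ⟨hc.1, hc.2.1, hc.2.2, rfl⟩, if_pos hc]
      · rw [if_neg (fun c => hc ⟨c.1, c.2.1, c.2.2.1⟩), if_neg hc]
    · intro l _ hne
      exact Finset.sum_eq_zero fun w _ => if_neg (fun c => hne c.2.2.2.symm)
    · intro habs
      exact absurd (Finset.mem_univ _) habs
  simp only [hcol]
  rw [sum_ite_and_three (fun u => toG u h ∈ X) (fun v => toG v k ∈ Y)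
    (fun w => toG w (h * k) ∈ Z)]
  simp only [Finset.sum_boole]
  rfl

open scoped Classical in
lemma key_hk [Fintype (SO2 F)] (X Y Z : Set (G0 F)) (h k : SO2 F) :
    ∑ ψ : AddChar (Fin 2 → F) ℂ,
        Wt X h ψ * Wt Y k (chRot h ψ) * (starRingEnd ℂ) (Wt Z (h * k) ψ)
      = (Fintype.card (Fin 2 → F) : ℂ) *
          ∑ u ∈ US X h, ∑ v ∈ US Y k,
            (if u + (SO2.mat h).mulVec v ∈ US Z (h * k) then (1 : ℂ) else 0) := by
  have expand : ∀ ψ : AddChar (Fin 2 → F) ℂ,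
      Wt X h ψ * Wt Y k (chRot h ψ) * (starRingEnd ℂ) (Wt Z (h * k) ψ)
        = ∑ u ∈ US X h, ∑ v ∈ US Y k, ∑ w ∈ US Z (h * k),
            ψ (u + (SO2.mat h).mulVec v - w) := by
    intro ψ
    rw [Wt, Wt, Wt, map_sum, Finset.sum_mul_sum, Finset.sum_mul]
    refine Finset.sum_congr rfl fun u _ => ?_
    rw [Finset.sum_mul]
    refine Finset.sum_congr rfl fun v _ => ?_
    rw [Finset.mul_sum]
    refine Finset.sum_congr rfl fun w _ => ?_
    rw [chRot_apply, ← AddChar.map_neg_eq_conj, ← AddChar.map_add_eq_mul,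
      ← AddChar.map_add_eq_mul, ← sub_eq_add_neg]
  simp only [expand]
  rw [Finset.sum_comm, Finset.mul_sum]
  refine Finset.sum_congr rfl fun u _ => ?_
  rw [Finset.sum_comm, Finset.mul_sum]
  refine Finset.sum_congr rfl fun v _ => ?_
  rw [Finset.sum_comm]
  have hdel : ∀ w ∈ US Z (h * k),
      (∑ ψ : AddChar (Fin 2 → F) ℂ, ψ (u + (SO2.mat h).mulVec v - w))
        = if u + (SO2.mat h).mulVec v = w then (Fintype.card (Fin 2 → F) : ℂ) else 0 := by
    intro w _
    rw [AddChar.sum_apply_eq_ite]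
    simp only [sub_eq_zero]
  rw [Finset.sum_congr rfl hdel,
    Finset.sum_ite_eq (US Z (h * k)) (u + (SO2.mat h).mulVec v)
      (fun _ => (Fintype.card (Fin 2 → F) : ℂ)),
    mul_ite, mul_one, mul_zero]

/-- The nontrivial-character part. -/
noncomputable def Tt [Fintype (SO2 F)] (X Y Z : Set (G0 F))
    (ψ : AddChar (Fin 2 → F) ℂ) : ℂ :=
  ∑ h : SO2 F, ∑ k : SO2 F,
    Wt X h ψ * Wt Y k (chRot h ψ) * (starRingEnd ℂ) (Wt Z (h * k) ψ)

lemma Tt_zero [Fintype (SO2 F)] (X Y Z : Set (G0 F)) :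
    Tt X Y Z (0 : AddChar (Fin 2 → F) ℂ)
      = ∑ h : SO2 F, ∑ k : SO2 F,
          ((US X h).card : ℂ) * ((US Y k).card : ℂ) * ((US Z (h * k)).card : ℂ) := by
  have hW : ∀ (S : Set (G0 F)) (h : SO2 F),
      Wt S h (0 : AddChar (Fin 2 → F) ℂ) = ((US S h).card : ℂ) := by
    intro S h
    rw [Wt]
    simp
  refine Finset.sum_congr rfl fun h _ => Finset.sum_congr rfl fun k _ => ?_
  rw [chRot_zero, hW, hW, hW, map_natCast]

lemma master [Fintype (SO2 F)] [Fintype (G0 F)] (X Y Z : Set (G0 F)) :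
    ((Nat.card {p : G0 F × G0 F × G0 F //
        p.1 ∈ X ∧ p.2.1 ∈ Y ∧ p.2.2 ∈ Z ∧ p.1 * p.2.1 = p.2.2}) : ℂ)
        * (Fintype.card (Fin 2 → F) : ℂ)
      = ((Nat.card {p : G0 F × G0 F × G0 F //
          p.1 ∈ X ∧ p.2.1 ∈ Y ∧ p.2.2 ∈ Z ∧ p.1.right * p.2.1.right = p.2.2.right}) : ℂ)
        + ∑ ψ ∈ Finset.univ.erase (0 : AddChar (Fin 2 → F) ℂ), Tt X Y Z ψ := by
  classical
  have h1 : ((Nat.card {p : G0 F × G0 F × G0 F //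
        p.1 ∈ X ∧ p.2.1 ∈ Y ∧ p.2.2 ∈ Z ∧ p.1 * p.2.1 = p.2.2}) : ℂ)
        * (Fintype.card (Fin 2 → F) : ℂ)
      = ∑ ψ : AddChar (Fin 2 → F) ℂ, Tt X Y Z ψ := by
    rw [M_eq X Y Z, Finset.sum_mul]
    have hhk : ∀ h : SO2 F,
        (∑ k : SO2 F, ∑ u ∈ US X h, ∑ v ∈ US Y k,
          (if u + (SO2.mat h).mulVec v ∈ US Z (h * k) then (1 : ℂ) else 0))
          * (Fintype.card (Fin 2 → F) : ℂ)
        = ∑ k : SO2 F, ∑ ψ : AddChar (Fin 2 → F) ℂ,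
            Wt X h ψ * Wt Y k (chRot h ψ) * (starRingEnd ℂ) (Wt Z (h * k) ψ) := by
      intro h
      rw [Finset.sum_mul]
      exact Finset.sum_congr rfl fun k _ => by rw [key_hk X Y Z h k, mul_comm]
    simp only [hhk]
    have swap1 : ∀ h : SO2 F,
        (∑ k : SO2 F, ∑ ψ : AddChar (Fin 2 → F) ℂ,
          Wt X h ψ * Wt Y k (chRot h ψ) * (starRingEnd ℂ) (Wt Z (h * k) ψ))
        = ∑ ψ : AddChar (Fin 2 → F) ℂ, ∑ k : SO2 F,
            Wt X h ψ * Wt Y k (chRot h ψ) * (starRingEnd ℂ) (Wt Z (h * k) ψ) :=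
      fun h => Finset.sum_comm
    simp only [swap1]
    rw [Finset.sum_comm]
    rfl
  rw [h1, ← Finset.add_sum_erase Finset.univ (Tt X Y Z) (Finset.mem_univ 0),
    Tt_zero, M2_eq]

end MixAux
namespace MixAux

variable {F : Type} [Field F] [Fintype F]

open Finset

lemma sum_mul_le_sqrt {ι : Type*} (s : Finset ι) (f g : ι → ℝ) :
    ∑ i ∈ s, f i * g i
      ≤ Real.sqrt (∑ i ∈ s, f i ^ 2) * Real.sqrt (∑ i ∈ s, g i ^ 2) := by
  calc ∑ i ∈ s, f i * g i ≤ |∑ i ∈ s, f i * g i| := le_abs_self _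
    _ = Real.sqrt ((∑ i ∈ s, f i * g i) ^ 2) := (Real.sqrt_sq_eq_abs _).symm
    _ ≤ Real.sqrt ((∑ i ∈ s, f i ^ 2) * ∑ i ∈ s, g i ^ 2) :=
        Real.sqrt_le_sqrt (Finset.sum_mul_sq_le_sq_mul_sq s f g)
    _ = _ := Real.sqrt_mul (Finset.sum_nonneg fun i _ => sq_nonneg _) _

lemma chRot_param_injective (h2 : (2 : F) ≠ 0) {ψ : AddChar (Fin 2 → F) ℂ} (hψ : ψ ≠ 0) :
    Function.Injective (fun m : SO2 F => chRot m ψ) := by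
  intro m₁ m₂ e
  simp only at e
  have h3 : chRot (m₁ * m₂⁻¹) ψ = ψ := by
    rw [← chRot_chRot, e, chRot_inv_chRot]
  have := chRot_fixed_eq_one h2 hψ h3
  rwa [mul_inv_eq_one] at this

set_option maxHeartbeats 1000000 in
lemma Tt_bound [Fintype (SO2 F)] [Fintype (G0 F)] (h2 : (2 : F) ≠ 0) (X Y Z : Set (G0 F)) :
    ‖∑ ψ ∈ Finset.univ.erase (0 : AddChar (Fin 2 → F) ℂ), Tt X Y Z ψ‖
      ≤ (Fintype.card (Fin 2 → F) : ℝ) *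
        Real.sqrt ((Fintype.card (Fin 2 → F) : ℝ) *
          ((Nat.card X : ℝ) * (Nat.card Y : ℝ) * (Nat.card Z : ℝ))) := by
  classical
  set N : ℝ := (Fintype.card (Fin 2 → F) : ℝ) with hN
  set E : Finset (AddChar (Fin 2 → F) ℂ) := Finset.univ.erase 0 with hE
  set cH : ℝ := (Fintype.card (SO2 F) : ℝ) with hcH
  set cX : ℝ := (Nat.card X : ℝ)
  set cY : ℝ := (Nat.card Y : ℝ)
  set cZ : ℝ := (Nat.card Z : ℝ)
  have hcHpos : 0 < cH := by
    rw [hcH]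
    exact_mod_cast Fintype.card_pos
  -- abbreviations
  set A : AddChar (Fin 2 → F) ℂ → SO2 F → ℝ :=
    fun ψ g => ∑ h : SO2 F, ‖Wt X h (chRot g ψ)‖ ^ 2 with hA
  set C : AddChar (Fin 2 → F) ℂ → SO2 F → ℝ :=
    fun ψ g => ∑ l : SO2 F, ‖Wt Z l (chRot g ψ)‖ ^ 2 with hC
  set B : AddChar (Fin 2 → F) ℂ → ℝ :=
    fun ψ => ∑ m : SO2 F, ∑ k : SO2 F, ‖Wt Y k (chRot m ψ)‖ ^ 2 with hB
  have hAnn : ∀ ψ g, 0 ≤ A ψ g := fun ψ g => Finset.sum_nonneg fun _ _ => sq_nonneg _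
  have hCnn : ∀ ψ g, 0 ≤ C ψ g := fun ψ g => Finset.sum_nonneg fun _ _ => sq_nonneg _
  have hBnn : ∀ ψ, 0 ≤ B ψ :=
    fun ψ => Finset.sum_nonneg fun _ _ => Finset.sum_nonneg fun _ _ => sq_nonneg _
  -- Step A : per-g bound
  have stepA : ∀ (ψ : AddChar (Fin 2 → F) ℂ) (g : SO2 F),
      ‖Tt X Y Z (chRot g ψ)‖ ≤ Real.sqrt (A ψ g * C ψ g) * Real.sqrt (B ψ) := by
    intro ψ g
    have hTt : Tt X Y Z (chRot g ψ)
        = ∑ h : SO2 F, ∑ k : SO2 F,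
            Wt X h (chRot g ψ) * Wt Y k (chRot (g * h) ψ)
              * (starRingEnd ℂ) (Wt Z (h * k) (chRot g ψ)) := by
      simp only [Tt, chRot_chRot]
    calc ‖Tt X Y Z (chRot g ψ)‖
        ≤ ∑ h : SO2 F, ∑ k : SO2 F,
            (‖Wt X h (chRot g ψ)‖ * ‖Wt Z (h * k) (chRot g ψ)‖)
              * ‖Wt Y k (chRot (g * h) ψ)‖ := by
          rw [hTt]
          refine le_trans (norm_sum_le _ _) (Finset.sum_le_sum fun h _ =>
            le_trans (norm_sum_le _ _) (Finset.sum_le_sum fun k _ => le_of_eq ?_))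
          rw [norm_mul, norm_mul, RCLike.norm_conj]
          ring
      _ = ∑ p : SO2 F × SO2 F,
            (‖Wt X p.1 (chRot g ψ)‖ * ‖Wt Z (p.1 * p.2) (chRot g ψ)‖)
              * ‖Wt Y p.2 (chRot (g * p.1) ψ)‖ := by rw [Fintype.sum_prod_type]
      _ ≤ Real.sqrt (∑ p : SO2 F × SO2 F,
            ((‖Wt X p.1 (chRot g ψ)‖ * ‖Wt Z (p.1 * p.2) (chRot g ψ)‖)) ^ 2)
          * Real.sqrt (∑ p : SO2 F × SO2 F, ‖Wt Y p.2 (chRot (g * p.1) ψ)‖ ^ 2) :=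
          sum_mul_le_sqrt _ _ _
      _ = Real.sqrt (A ψ g * C ψ g) * Real.sqrt (B ψ) := by
          congr 1
          · congr 1
            rw [Fintype.sum_prod_type]
            rw [hA, hC]
            simp only
            rw [Finset.sum_mul]
            refine Finset.sum_congr rfl fun h _ => ?_
            calc ∑ k : SO2 F,
                  (‖Wt X h (chRot g ψ)‖ * ‖Wt Z (h * k) (chRot g ψ)‖) ^ 2
                = ∑ k : SO2 F,
                    ‖Wt X h (chRot g ψ)‖ ^ 2 * ‖Wt Z (h * k) (chRot g ψ)‖ ^ 2 :=
                  Finset.sum_congr rfl fun k _ => by ring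
              _ = ‖Wt X h (chRot g ψ)‖ ^ 2
                    * ∑ k : SO2 F, ‖Wt Z (h * k) (chRot g ψ)‖ ^ 2 := by
                  rw [Finset.mul_sum]
              _ = ‖Wt X h (chRot g ψ)‖ ^ 2
                    * ∑ l : SO2 F, ‖Wt Z l (chRot g ψ)‖ ^ 2 := by
                  congr 1
                  exact Fintype.sum_equiv (Equiv.mulLeft h) _ _ fun k => rfl
          · congr 1
            rw [Fintype.sum_prod_type, hB]
            simp only
            exact Fintype.sum_equiv (Equiv.mulLeft g) _ _ fun h => rfl
  -- Step B : per-ψ bound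
  have stepB : ∀ ψ ∈ E,
      ‖∑ g : SO2 F, Tt X Y Z (chRot g ψ)‖
        ≤ Real.sqrt (∑ g : SO2 F, A ψ g) * Real.sqrt (∑ g : SO2 F, C ψ g)
            * Real.sqrt (B ψ) := by
    intro ψ _
    calc ‖∑ g : SO2 F, Tt X Y Z (chRot g ψ)‖
        ≤ ∑ g : SO2 F, ‖Tt X Y Z (chRot g ψ)‖ := norm_sum_le _ _
      _ ≤ ∑ g : SO2 F, Real.sqrt (A ψ g * C ψ g) * Real.sqrt (B ψ) :=
          Finset.sum_le_sum fun g _ => stepA ψ g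
      _ = (∑ g : SO2 F, Real.sqrt (A ψ g) * Real.sqrt (C ψ g)) * Real.sqrt (B ψ) := by
          rw [Finset.sum_mul]
          exact Finset.sum_congr rfl fun g _ => by
            rw [Real.sqrt_mul (hAnn ψ g)]
      _ ≤ (Real.sqrt (∑ g : SO2 F, Real.sqrt (A ψ g) ^ 2)
            * Real.sqrt (∑ g : SO2 F, Real.sqrt (C ψ g) ^ 2)) * Real.sqrt (B ψ) :=
          mul_le_mul_of_nonneg_right (sum_mul_le_sqrt _ _ _) (Real.sqrt_nonneg _)
      _ = Real.sqrt (∑ g : SO2 F, A ψ g) * Real.sqrt (∑ g : SO2 F, C ψ g)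
            * Real.sqrt (B ψ) := by
          rw [Finset.sum_congr rfl fun g _ => Real.sq_sqrt (hAnn ψ g),
            Finset.sum_congr rfl fun g _ => Real.sq_sqrt (hCnn ψ g)]
  -- Step C : B bound
  have stepC : ∀ ψ ∈ E, B ψ ≤ N * cY := by
    intro ψ hψE
    have hψ : ψ ≠ 0 := (Finset.mem_erase.mp hψE).1
    have hinj := chRot_param_injective h2 hψ
    calc B ψ = ∑ χ ∈ Finset.univ.image (fun m : SO2 F => chRot m ψ),
          ∑ k : SO2 F, ‖Wt Y k χ‖ ^ 2 := by
          rw [Finset.sum_image (fun m₁ _ m₂ _ e => hinj e)]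
      _ ≤ ∑ χ : AddChar (Fin 2 → F) ℂ, ∑ k : SO2 F, ‖Wt Y k χ‖ ^ 2 :=
          Finset.sum_le_sum_of_subset_of_nonneg (Finset.subset_univ _)
            (fun χ _ _ => Finset.sum_nonneg fun _ _ => sq_nonneg _)
      _ = ∑ k : SO2 F, ∑ χ : AddChar (Fin 2 → F) ℂ, ‖Wt Y k χ‖ ^ 2 := Finset.sum_comm
      _ = ∑ k : SO2 F, N * ((US Y k).card : ℝ) :=
          Finset.sum_congr rfl fun k _ => parseval Y k
      _ = N * cY := by rw [← Finset.mul_sum, ← card_set_eq]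
  -- Step D : sums of A and C over E
  have stepD : ∀ (W : Set (G0 F)),
      ∑ ψ ∈ E, (∑ g : SO2 F, ∑ h : SO2 F, ‖Wt W h (chRot g ψ)‖ ^ 2)
        ≤ cH * (N * (Nat.card W : ℝ)) := by
    intro W
    calc ∑ ψ ∈ E, ∑ g : SO2 F, ∑ h : SO2 F, ‖Wt W h (chRot g ψ)‖ ^ 2
        = ∑ g : SO2 F, ∑ ψ ∈ E, ∑ h : SO2 F, ‖Wt W h (chRot g ψ)‖ ^ 2 :=
          Finset.sum_comm
      _ ≤ ∑ g : SO2 F, ∑ ψ : AddChar (Fin 2 → F) ℂ, ∑ h : SO2 F,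
            ‖Wt W h (chRot g ψ)‖ ^ 2 :=
          Finset.sum_le_sum fun g _ =>
            Finset.sum_le_sum_of_subset_of_nonneg (Finset.subset_univ _)
              (fun χ _ _ => Finset.sum_nonneg fun _ _ => sq_nonneg _)
      _ = ∑ _g : SO2 F, ∑ χ : AddChar (Fin 2 → F) ℂ, ∑ h : SO2 F, ‖Wt W h χ‖ ^ 2 :=
          Finset.sum_congr rfl fun g _ =>
            Fintype.sum_equiv (chRotEquiv g) _ _ fun ψ => rfl
      _ = ∑ _g : SO2 F, ∑ h : SO2 F, ∑ χ : AddChar (Fin 2 → F) ℂ, ‖Wt W h χ‖ ^ 2 :=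
          Finset.sum_congr rfl fun g _ => Finset.sum_comm
      _ = ∑ _g : SO2 F, ∑ h : SO2 F, N * ((US W h).card : ℝ) :=
          Finset.sum_congr rfl fun g _ => Finset.sum_congr rfl fun h _ => parseval W h
      _ = ∑ _g : SO2 F, N * (Nat.card W : ℝ) :=
          Finset.sum_congr rfl fun g _ => by rw [← Finset.mul_sum, ← card_set_eq]
      _ = cH * (N * (Nat.card W : ℝ)) := by
          rw [Finset.sum_const, nsmul_eq_mul, Finset.card_univ, hcH]
  -- Step E : averaging
  have stepE : ∑ ψ ∈ E, (∑ g : SO2 F, Tt X Y Z (chRot g ψ))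
      = (Fintype.card (SO2 F) : ℂ) * ∑ ψ ∈ E, Tt X Y Z ψ := by
    rw [Finset.sum_comm]
    have hper : ∀ g : SO2 F, ∑ ψ ∈ E, Tt X Y Z (chRot g ψ) = ∑ ψ ∈ E, Tt X Y Z ψ := by
      intro g
      refine Finset.sum_bij' (fun ψ _ => chRot g ψ) (fun χ _ => chRot g⁻¹ χ) ?_ ?_ ?_ ?_ ?_
      · intro ψ hψ
        have h1 : ψ ≠ 0 := (Finset.mem_erase.mp hψ).1
        exact Finset.mem_erase.mpr
          ⟨fun e => h1 ((chRot_eq_zero_iff g ψ).mp e), Finset.mem_univ _⟩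
      · intro χ hχ
        have h1 : χ ≠ 0 := (Finset.mem_erase.mp hχ).1
        exact Finset.mem_erase.mpr
          ⟨fun e => h1 ((chRot_eq_zero_iff g⁻¹ χ).mp e), Finset.mem_univ _⟩
      · intro ψ _
        exact chRot_inv_chRot g ψ
      · intro χ _
        exact chRot_chRot_inv g χ
      · intro ψ _
        rfl
    rw [Finset.sum_congr rfl fun g (_ : g ∈ Finset.univ) => hper g,
      Finset.sum_const, nsmul_eq_mul, Finset.card_univ]
  -- Put everything together
  have key : cH * ‖∑ ψ ∈ E, Tt X Y Z ψ‖
      ≤ cH * (N * Real.sqrt (N * (cX * cY * cZ))) := by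
    calc cH * ‖∑ ψ ∈ E, Tt X Y Z ψ‖
        = ‖∑ ψ ∈ E, (∑ g : SO2 F, Tt X Y Z (chRot g ψ))‖ := by
          rw [stepE, norm_mul, Complex.norm_natCast, hcH]
      _ ≤ ∑ ψ ∈ E, ‖∑ g : SO2 F, Tt X Y Z (chRot g ψ)‖ := norm_sum_le _ _
      _ ≤ ∑ ψ ∈ E, Real.sqrt (∑ g : SO2 F, A ψ g) * Real.sqrt (∑ g : SO2 F, C ψ g)
            * Real.sqrt (B ψ) := Finset.sum_le_sum stepB
      _ ≤ ∑ ψ ∈ E, Real.sqrt (∑ g : SO2 F, A ψ g) * Real.sqrt (∑ g : SO2 F, C ψ g)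
            * Real.sqrt (N * cY) := by
          refine Finset.sum_le_sum fun ψ hψ => ?_
          exact mul_le_mul_of_nonneg_left (Real.sqrt_le_sqrt (stepC ψ hψ))
            (mul_nonneg (Real.sqrt_nonneg _) (Real.sqrt_nonneg _))
      _ = (∑ ψ ∈ E, Real.sqrt (∑ g : SO2 F, A ψ g) * Real.sqrt (∑ g : SO2 F, C ψ g))
            * Real.sqrt (N * cY) := by rw [Finset.sum_mul]
      _ ≤ (Real.sqrt (∑ ψ ∈ E, Real.sqrt (∑ g : SO2 F, A ψ g) ^ 2)
            * Real.sqrt (∑ ψ ∈ E, Real.sqrt (∑ g : SO2 F, C ψ g) ^ 2))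
            * Real.sqrt (N * cY) :=
          mul_le_mul_of_nonneg_right (sum_mul_le_sqrt _ _ _) (Real.sqrt_nonneg _)
      _ = (Real.sqrt (∑ ψ ∈ E, ∑ g : SO2 F, A ψ g)
            * Real.sqrt (∑ ψ ∈ E, ∑ g : SO2 F, C ψ g)) * Real.sqrt (N * cY) := by
          rw [Finset.sum_congr rfl fun ψ _ =>
              Real.sq_sqrt (Finset.sum_nonneg fun g _ => hAnn ψ g),
            Finset.sum_congr rfl fun ψ _ =>
              Real.sq_sqrt (Finset.sum_nonneg fun g _ => hCnn ψ g)]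
      _ ≤ (Real.sqrt (cH * (N * cX)) * Real.sqrt (cH * (N * cZ))) * Real.sqrt (N * cY) := by
          have hAx := stepD X
          have hCz := stepD Z
          gcongr
      _ = cH * (N * Real.sqrt (N * (cX * cY * cZ))) := by
          rw [← Real.sqrt_mul (by positivity), ← Real.sqrt_mul (by positivity)]
          rw [show cH * (N * cX) * (cH * (N * cZ)) * (N * cY)
              = cH ^ 2 * (N ^ 2 * (N * (cX * cY * cZ))) by ring]
          rw [Real.sqrt_mul (sq_nonneg cH), Real.sqrt_sq hcHpos.le,
            Real.sqrt_mul (sq_nonneg N), Real.sqrt_sq (by positivity : (0:ℝ) ≤ N)]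
  exact le_of_mul_le_mul_left key hcHpos

end MixAux
/-- **Theorem 1.11.** For any `X, Y, Z ⊆ G₀ = 𝔽_q² ⋊ SO₂(𝔽_q)`,
`|#{(x,y,z) ∈ X×Y×Z : xy = z} - Ṁ₂/q²| ≤ q·√(|X||Y||Z|)`, where
`Ṁ₂ = #{(x,y,z) ∈ X×Y×Z : ẋẏ = ż}`. -/
theorem mixing_G0 (F : Type) [Field F] [Fintype F] (q : ℕ) (hq : q = Fintype.card F)
    (hodd : Odd q) (X Y Z : Set (G0 F)) :
    |(Nat.card {p : G0 F × G0 F × G0 F //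
          p.1 ∈ X ∧ p.2.1 ∈ Y ∧ p.2.2 ∈ Z ∧ p.1 * p.2.1 = p.2.2} : ℝ) -
        (Nat.card {p : G0 F × G0 F × G0 F //
          p.1 ∈ X ∧ p.2.1 ∈ Y ∧ p.2.2 ∈ Z ∧
            p.1.right * p.2.1.right = p.2.2.right} : ℝ) / (q : ℝ) ^ 2| ≤
      (q : ℝ) * Real.sqrt ((Nat.card X : ℝ) * (Nat.card Y : ℝ) * (Nat.card Z : ℝ)) := by
  classical
  haveI : Fintype (SO2 F) := Fintype.ofFinite _
  haveI : Fintype (G0 F) := Fintype.ofFinite _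
  have h2 : (2 : F) ≠ 0 := MixAux.two_ne_zero_of_odd_card (hq ▸ hodd)
  have hqpos : 0 < q := by
    rw [hq]
    exact Fintype.card_pos
  have hcard : Fintype.card (Fin 2 → F) = q ^ 2 := by
    rw [Fintype.card_fun, Fintype.card_fin, hq]
  set M1 : ℕ := Nat.card {p : G0 F × G0 F × G0 F //
      p.1 ∈ X ∧ p.2.1 ∈ Y ∧ p.2.2 ∈ Z ∧ p.1 * p.2.1 = p.2.2} with hM1
  set M2 : ℕ := Nat.card {p : G0 F × G0 F × G0 F //
      p.1 ∈ X ∧ p.2.1 ∈ Y ∧ p.2.2 ∈ Z ∧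
        p.1.right * p.2.1.right = p.2.2.right} with hM2
  set S : ℂ := ∑ ψ ∈ Finset.univ.erase (0 : AddChar (Fin 2 → F) ℂ), MixAux.Tt X Y Z ψ
    with hS
  have hmaster : (M1 : ℂ) * (Fintype.card (Fin 2 → F) : ℂ) = (M2 : ℂ) + S :=
    MixAux.master X Y Z
  have hTb := MixAux.Tt_bound h2 X Y Z
  rw [← hS] at hTb
  have hNCne : ((q : ℂ) ^ 2) ≠ 0 := by
    have : (q : ℂ) ≠ 0 := Nat.cast_ne_zero.mpr hqpos.ne'
    exact pow_ne_zero 2 this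
  have hNC : (Fintype.card (Fin 2 → F) : ℂ) = (q : ℂ) ^ 2 := by
    rw [hcard]
    push_cast
    ring
  have hcast : (((M1 : ℝ) - (M2 : ℝ) / (q : ℝ) ^ 2 : ℝ) : ℂ)
      = (M1 : ℂ) - (M2 : ℂ) / ((q : ℂ) ^ 2) := by
    push_cast
    ring
  have hdiv : (M1 : ℂ) - (M2 : ℂ) / ((q : ℂ) ^ 2) = S / ((q : ℂ) ^ 2) := by
    rw [hNC] at hmaster
    rw [eq_div_iff hNCne, sub_mul, div_mul_cancel₀ _ hNCne]
    linear_combination hmaster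
  have habs : |(M1 : ℝ) - (M2 : ℝ) / (q : ℝ) ^ 2| = ‖S‖ / (q : ℝ) ^ 2 := by
    have h1 : ‖(((M1 : ℝ) - (M2 : ℝ) / (q : ℝ) ^ 2 : ℝ) : ℂ)‖
        = ‖S / ((q : ℂ) ^ 2)‖ := by rw [hcast, hdiv]
    rw [Complex.norm_real] at h1
    rw [Real.norm_eq_abs] at h1
    rw [h1, norm_div]
    congr 1
    rw [norm_pow, Complex.norm_natCast]
  rw [habs]
  have hNR : (Fintype.card (Fin 2 → F) : ℝ) = (q : ℝ) ^ 2 := by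
    rw [hcard]
    push_cast
    ring
  rw [hNR] at hTb
  have hq2pos : (0 : ℝ) < (q : ℝ) ^ 2 := by positivity
  rw [div_le_iff₀ hq2pos]
  calc ‖S‖ ≤ (q : ℝ) ^ 2 * Real.sqrt ((q : ℝ) ^ 2 *
        ((Nat.card X : ℝ) * (Nat.card Y : ℝ) * (Nat.card Z : ℝ))) := hTb
    _ = (q : ℝ) * Real.sqrt ((Nat.card X : ℝ) * (Nat.card Y : ℝ) * (Nat.card Z : ℝ))
          * (q : ℝ) ^ 2 := by
        rw [Real.sqrt_mul (sq_nonneg _), Real.sqrt_sq (by positivity : (0:ℝ) ≤ (q:ℝ))]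
        ring
end

section
/- For all nonempty subsets X, Y of G₀ = 𝔽_q² ⋊ SO₂(𝔽_q), writing Ṅ = #{(g₁,g₂,h₁,h₂) ∈ X²×Y² : ġ₁ḣ₁ = ġ₂ḣ₂}, one has |XY| ≥ (1/2)·min{ q²|X|²|Y|²/Ṅ , |X||Y|/q² }. -/
open Matrix
open scoped Pointwise

open Finset

noncomputable instance (F : Type) [Field F] [Fintype F] : Fintype (SO2 F) := Fintype.ofFinite _
noncomputable instance (F : Type) [Field F] [Fintype F] : Fintype (G0 F) := Fintype.ofFinite _

section Aux
variable {F : Type} [Field F] [Fintype F] [DecidableEq F]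

lemma two_ne_zero_of_odd_card (hodd : Odd (Fintype.card F)) : (2:F) ≠ 0 := by
  intro h2
  have hdvd : ringChar F ∣ 2 := (CharP.cast_eq_zero_iff F (ringChar F) 2).mp (by exact_mod_cast h2)
  obtain ⟨n, hp, hcard⟩ := FiniteField.card F (ringChar F)
  have hpe : ringChar F = 2 := (Nat.prime_dvd_prime_iff_eq hp Nat.prime_two).mp hdvd
  rw [hpe] at hcard
  have heven : Even (Fintype.card F) := by
    rw [hcard]; exact (Nat.even_pow).mpr ⟨even_iff_two_dvd.mpr dvd_rfl, n.ne_zero⟩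
  exact (Nat.not_odd_iff_even.mpr heven) hodd

lemma SO2.eq_one_of_fixed (h2 : (2:F) ≠ 0) (h : SO2 F) (ξ : Fin 2 → F) (hξ : ξ ≠ 0)
    (hfix : Matrix.vecMul ξ (SO2.mat h) = ξ) : h = 1 := by
  obtain ⟨a, b, hab, hmat⟩ := h.2
  have hmat' : SO2.mat h = !![a, -b; b, a] := hmat
  rw [hmat'] at hfix
  have e0 := congr_fun hfix 0
  have e1 := congr_fun hfix 1
  simp [Matrix.vecMul, dotProduct, Fin.sum_univ_two] at e0 e1
  have key0 : ξ 0 * ((a-1)^2 + b^2) = 0 := by linear_combination (a-1) * e0 - b * e1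
  have key1 : ξ 1 * ((a-1)^2 + b^2) = 0 := by linear_combination b * e0 + (a-1) * e1
  have hsum : (a-1)^2 + b^2 = 0 := by
    have hne : ξ 0 ≠ 0 ∨ ξ 1 ≠ 0 := by
      by_contra hc; push_neg at hc
      apply hξ; funext j
      fin_cases j
      · exact hc.1
      · exact hc.2
    rcases hne with hi | hi
    · exact (mul_eq_zero.mp key0).resolve_left hi
    · exact (mul_eq_zero.mp key1).resolve_left hi
  have ha : a = 1 := by
    have h2a : 2 * (a - 1) = 0 := by linear_combination hab - hsum
    rcases mul_eq_zero.mp h2a with hcon | hcon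
    · exact absurd hcon h2
    · exact sub_eq_zero.mp hcon
  have hb : b = 0 := by
    rw [ha] at hsum
    have hb2 : b ^ 2 = 0 := by linear_combination hsum
    exact pow_eq_zero_iff (two_ne_zero) |>.mp hb2
  have hone : SO2.mat h = 1 := by
    rw [hmat', ha, hb]; simp [Matrix.one_fin_two]
  exact Subtype.ext (Units.ext hone)

lemma SO2.vecMul_mat_injective (h2 : (2:F) ≠ 0) (ξ : Fin 2 → F) (hξ : ξ ≠ 0) :
    Function.Injective (fun h : SO2 F => Matrix.vecMul ξ (SO2.mat h)) := by
  intro h₁ h₂ heq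
  simp only at heq
  have hmm : SO2.mat h₂ * SO2.mat (h₂⁻¹ * h₁) = SO2.mat h₁ := by
    rw [← SO2.mat_mul, mul_inv_cancel_left]
  have hfix : Matrix.vecMul (Matrix.vecMul ξ (SO2.mat h₂)) (SO2.mat (h₂⁻¹ * h₁))
      = Matrix.vecMul ξ (SO2.mat h₂) := by
    rw [Matrix.vecMul_vecMul, hmm, ← heq]
  have hη : Matrix.vecMul ξ (SO2.mat h₂) ≠ 0 := by
    intro h0
    apply hξ
    have : Matrix.vecMul (Matrix.vecMul ξ (SO2.mat h₂)) (SO2.mat h₂⁻¹) = ξ := by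
      rw [Matrix.vecMul_vecMul, ← SO2.mat_mul, mul_inv_cancel, SO2.mat_one, Matrix.vecMul_one]
    rw [h0, Matrix.zero_vecMul] at this
    exact this.symm
  have : h₂⁻¹ * h₁ = 1 := SO2.eq_one_of_fixed h2 _ _ hη hfix
  exact (inv_mul_eq_one.mp this).symm ▸ rfl

lemma SO2.vecMul_mat_ne_zero (h : SO2 F) (ξ : Fin 2 → F) (hξ : ξ ≠ 0) :
    Matrix.vecMul ξ (SO2.mat h) ≠ 0 := by
  intro h0
  apply hξ
  have : Matrix.vecMul (Matrix.vecMul ξ (SO2.mat h)) (SO2.mat h⁻¹) = ξ := by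
    rw [Matrix.vecMul_vecMul, ← SO2.mat_mul, mul_inv_cancel, SO2.mat_one, Matrix.vecMul_one]
  rw [h0, Matrix.zero_vecMul] at this
  exact this.symm


noncomputable def psiF (F : Type) [Field F] [Fintype F] : AddChar F ℂ :=
  (AddChar.exists_apply_ne_zero.mpr (one_ne_zero : (1:F) ≠ 0)).choose

lemma psiF_spec (F : Type) [Field F] [Fintype F] : psiF F 1 ≠ 1 :=
  (AddChar.exists_apply_ne_zero.mpr (one_ne_zero : (1:F) ≠ 0)).choose_spec

noncomputable def eV (ξ w : Fin 2 → F) : ℂ := psiF F (ξ ⬝ᵥ w)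

/-- translation component -/
def zc (g : G0 F) : Fin 2 → F := Multiplicative.toAdd g.left

lemma zc_mul (g₁ g₂ : G0 F) :
    zc (g₁ * g₂) = zc g₁ + (SO2.mat g₁.right).mulVec (zc g₂) := by
  show Multiplicative.toAdd ((g₁ * g₂).left) = _
  rw [SemidirectProduct.mul_left]
  simp [zc, rotHom, toAdd_mul, SO2.mat]

lemma G0_eq_iff (g₁ g₂ : G0 F) : g₁ = g₂ ↔ (zc g₁ = zc g₂ ∧ g₁.right = g₂.right) := by
  constructor
  · rintro rfl; exact ⟨rfl, rfl⟩
  · rintro ⟨h1, h2⟩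
    exact SemidirectProduct.ext (Multiplicative.toAdd.injective h1) h2

lemma sub_dot (ξ a b : Fin 2 → F) : eV ξ a * (starRingEnd ℂ) (eV ξ b) = eV ξ (a - b) := by
  rw [eV, eV, eV, dotProduct_sub, sub_eq_add_neg, AddChar.map_add_eq_mul,
    AddChar.map_neg_eq_conj]

end Aux

section Aux2
variable {F : Type} [Field F] [Fintype F] [DecidableEq F]

lemma eV_add_left (ξ ξ' w : Fin 2 → F) : eV (ξ + ξ') w = eV ξ w * eV ξ' w := by
  rw [eV, eV, eV, add_dotProduct, AddChar.map_add_eq_mul]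

lemma eV_orth (w : Fin 2 → F) :
    ∑ ξ : Fin 2 → F, eV ξ w = if w = 0 then ((Fintype.card F : ℂ))^2 else 0 := by
  rcases eq_or_ne w 0 with rfl | hw
  · simp [eV, Fintype.card_fun, sq]
  · simp only [if_neg hw]
    obtain ⟨i, hi⟩ : ∃ i, w i ≠ 0 := by
      by_contra h; push_neg at h; exact hw (funext h)
    set ξ₀ : Fin 2 → F := Pi.single i (w i)⁻¹ with hξ₀
    have hdot : ξ₀ ⬝ᵥ w = 1 := by
      show ∑ j, ξ₀ j * w j = 1
      rw [Fintype.sum_eq_single i (fun j hj => by simp [hξ₀, Pi.single_apply, hj])]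
      simp [hξ₀, inv_mul_cancel₀ hi]
    have key : eV ξ₀ w * ∑ ξ : Fin 2 → F, eV ξ w = ∑ ξ : Fin 2 → F, eV ξ w := by
      rw [Finset.mul_sum]
      exact Fintype.sum_equiv (Equiv.addLeft ξ₀) _ _ (fun ξ => (eV_add_left ξ₀ ξ w).symm)
    have hne : eV ξ₀ w ≠ 1 := by rw [eV, hdot]; exact psiF_spec F
    by_contra hsum
    apply hne
    have key2 : eV ξ₀ w * ∑ ξ : Fin 2 → F, eV ξ w = 1 * ∑ ξ : Fin 2 → F, eV ξ w := by
      rw [key, one_mul]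
    exact mul_right_cancel₀ hsum key2

lemma eV_mulVec (ξ w : Fin 2 → F) (A : Matrix (Fin 2) (Fin 2) F) :
    eV ξ (A.mulVec w) = eV (Matrix.vecMul ξ A) w := by
  rw [eV, eV, Matrix.dotProduct_mulVec]

end Aux2

section Pairs
variable {α β : Type*} [DecidableEq β]

lemma pair_fiber_eq (s : Finset α) (f : α → β) (b : β) :
    ((s ×ˢ s).filter fun pp => f pp.1 = f pp.2).filter (fun pp => f pp.1 = b)
      = (s.filter fun a => f a = b) ×ˢ (s.filter fun a => f a = b) := by
  ext ⟨a₁, a₂⟩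
  simp only [Finset.mem_filter, Finset.mem_product]
  constructor
  · rintro ⟨⟨⟨h1, h2⟩, h3⟩, h4⟩
    exact ⟨⟨h1, h4⟩, h2, h3 ▸ h4⟩
  · rintro ⟨⟨h1, h2⟩, h3, h4⟩
    exact ⟨⟨⟨h1, h3⟩, h2.trans h4.symm⟩, h2⟩

lemma sum_pairs [Fintype β] (s : Finset α) (f : α → β) (g : α → ℂ) :
    ∑ b : β, (∑ a ∈ s.filter (fun a => f a = b), g a) *
        (starRingEnd ℂ) (∑ a ∈ s.filter (fun a => f a = b), g a)
      = ∑ pp ∈ (s ×ˢ s).filter (fun pp => f pp.1 = f pp.2), g pp.1 * (starRingEnd ℂ) (g pp.2) := by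
  have hfib := Finset.sum_fiberwise_of_maps_to
    (s := (s ×ˢ s).filter fun pp => f pp.1 = f pp.2) (t := (Finset.univ : Finset β))
    (g := fun pp => f pp.1) (fun pp _ => Finset.mem_univ _)
    (fun pp => g pp.1 * (starRingEnd ℂ) (g pp.2))
  rw [← hfib]
  refine Finset.sum_congr rfl fun b _ => ?_
  have : ((s ×ˢ s).filter fun pp => f pp.1 = f pp.2).filter (fun pp => f pp.1 = b)
      = (s.filter fun a => f a = b) ×ˢ (s.filter fun a => f a = b) := pair_fiber_eq s f b
  rw [this, Finset.sum_product, map_sum, Finset.sum_mul_sum]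

lemma count_pairs [Fintype β] (s : Finset α) (f : α → β) :
    ((s ×ˢ s).filter fun pp => f pp.1 = f pp.2).card
      = ∑ b : β, ((s.filter fun a => f a = b).card)^2 := by
  rw [Finset.card_eq_sum_card_fiberwise (f := fun pp => f pp.1) (t := Finset.univ)
    (fun pp _ => Finset.mem_univ _)]
  refine Finset.sum_congr rfl fun b _ => ?_
  rw [show {pp ∈ (s ×ˢ s).filter fun pp => f pp.1 = f pp.2 | f pp.1 = b}
    = (s.filter fun a => f a = b) ×ˢ (s.filter fun a => f a = b) from pair_fiber_eq s f b,
    Finset.card_product, sq]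

end Pairs

section Main
variable {F : Type} [Field F] [Fintype F] [DecidableEq F] [DecidableEq (G0 F)] [DecidableEq (SO2 F)]

noncomputable def fhat (Wf : Finset (G0 F)) (η : Fin 2 → F) (k : SO2 F) : ℂ :=
  ∑ w ∈ Wf.filter (fun x => x.right = k), eV η (zc w)

/-- Parseval identity for a rotation fiber. -/
lemma parseval (Wf : Finset (G0 F)) (k : SO2 F) :
    ∑ η : Fin 2 → F, (Complex.normSq (fhat Wf η k) : ℂ)
      = ((Fintype.card F : ℂ))^2 * ((Wf.filter (fun x => x.right = k)).card : ℂ) := by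
  set t := Wf.filter (fun x => x.right = k) with ht
  have expand : ∀ η : Fin 2 → F, (Complex.normSq (fhat Wf η k) : ℂ)
      = ∑ p ∈ t ×ˢ t, eV η (zc p.1 - zc p.2) := by
    intro η
    rw [← Complex.mul_conj, fhat, map_sum, Finset.sum_mul_sum]
    rw [Finset.sum_product]
    exact Finset.sum_congr rfl fun y _ => Finset.sum_congr rfl fun y' _ => sub_dot _ _ _
  rw [Finset.sum_congr rfl fun η _ => expand η, Finset.sum_comm]
  have diag : ∀ p ∈ t ×ˢ t, ∑ η : Fin 2 → F, eV η (zc p.1 - zc p.2)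
      = if p.1 = p.2 then ((Fintype.card F : ℂ))^2 else 0 := by
    rintro ⟨y, y'⟩ hp
    rw [Finset.mem_product, ht, Finset.mem_filter, Finset.mem_filter] at hp
    rw [eV_orth]
    congr 1
    simp only [sub_eq_zero, eq_iff_iff]
    constructor
    · intro hzc
      exact ((G0_eq_iff y y').mpr ⟨hzc, hp.1.2.trans hp.2.2.symm⟩)
    · rintro rfl; rfl
  rw [Finset.sum_congr rfl diag, Finset.sum_product]
  rw [Finset.sum_congr rfl
    (fun y _ => Finset.sum_ite_eq t y (fun _ => ((Fintype.card F : ℂ))^2))]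
  rw [Finset.sum_congr rfl (fun y hy => if_pos hy), Finset.sum_const, nsmul_eq_mul, mul_comm]

end Main

section Main2
variable {F : Type} [Field F] [Fintype F] [DecidableEq F] [DecidableEq (G0 F)] [DecidableEq (SO2 F)]

noncomputable def Phi (Xf Yf : Finset (G0 F)) (ξ : Fin 2 → F) (m : SO2 F) : ℂ :=
  ∑ p ∈ (Xf ×ˢ Yf).filter (fun p => (p.1 * p.2).right = m), eV ξ (zc (p.1 * p.2))

noncomputable def SqR (Xf Yf : Finset (G0 F)) (ξ : Fin 2 → F) : ℝ :=
  ∑ m : SO2 F, Complex.normSq (Phi Xf Yf ξ m)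

lemma SqR_nonneg (Xf Yf : Finset (G0 F)) (ξ : Fin 2 → F) : 0 ≤ SqR Xf Yf ξ :=
  Finset.sum_nonneg fun _ _ => Complex.normSq_nonneg _

/-- I1 : total sum of `SqR` equals `q² * E`. -/
lemma sum_SqR (Xf Yf : Finset (G0 F)) :
    ∑ ξ : Fin 2 → F, SqR Xf Yf ξ
      = (Fintype.card F : ℝ)^2 * ((((Xf ×ˢ Yf) ×ˢ (Xf ×ˢ Yf)).filter
          (fun pp => pp.1.1 * pp.1.2 = pp.2.1 * pp.2.2)).card : ℝ) := by
  have main : ∑ ξ : Fin 2 → F, ((SqR Xf Yf ξ : ℂ))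
      = ((Fintype.card F : ℂ))^2 * ((((Xf ×ˢ Yf) ×ˢ (Xf ×ˢ Yf)).filter
          (fun pp => pp.1.1 * pp.1.2 = pp.2.1 * pp.2.2)).card : ℂ) := by
    have step1 : ∀ ξ : Fin 2 → F, ((SqR Xf Yf ξ : ℂ))
        = ∑ pp ∈ ((Xf ×ˢ Yf) ×ˢ (Xf ×ˢ Yf)).filter
            (fun pp => (pp.1.1 * pp.1.2).right = (pp.2.1 * pp.2.2).right),
            eV ξ (zc (pp.1.1 * pp.1.2) - zc (pp.2.1 * pp.2.2)) := by
      intro ξ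
      rw [SqR, Complex.ofReal_sum]
      calc ∑ m : SO2 F, ((Complex.normSq (Phi Xf Yf ξ m) : ℂ))
          = ∑ m : SO2 F, Phi Xf Yf ξ m * (starRingEnd ℂ) (Phi Xf Yf ξ m) :=
            Finset.sum_congr rfl fun m _ => (Complex.mul_conj _).symm
        _ = ∑ pp ∈ ((Xf ×ˢ Yf) ×ˢ (Xf ×ˢ Yf)).filter
              (fun pp => (pp.1.1 * pp.1.2).right = (pp.2.1 * pp.2.2).right),
              eV ξ (zc (pp.1.1 * pp.1.2)) * (starRingEnd ℂ) (eV ξ (zc (pp.2.1 * pp.2.2))) :=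
            sum_pairs (Xf ×ˢ Yf) (fun p => (p.1 * p.2).right) (fun p => eV ξ (zc (p.1 * p.2)))
        _ = _ := Finset.sum_congr rfl fun pp _ => sub_dot _ _ _
    rw [Finset.sum_congr rfl fun ξ _ => step1 ξ, Finset.sum_comm]
    have orth : ∀ pp ∈ ((Xf ×ˢ Yf) ×ˢ (Xf ×ˢ Yf)).filter
        (fun pp => (pp.1.1 * pp.1.2).right = (pp.2.1 * pp.2.2).right),
        ∑ ξ : Fin 2 → F, eV ξ (zc (pp.1.1 * pp.1.2) - zc (pp.2.1 * pp.2.2))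
          = if pp.1.1 * pp.1.2 = pp.2.1 * pp.2.2 then ((Fintype.card F : ℂ))^2 else 0 := by
      intro pp hpp
      rw [Finset.mem_filter] at hpp
      rw [eV_orth]
      congr 1
      simp only [sub_eq_zero, eq_iff_iff]
      constructor
      · intro hzc
        exact (G0_eq_iff _ _).mpr ⟨hzc, hpp.2⟩
      · intro he; rw [he]
    rw [Finset.sum_congr rfl orth, Finset.sum_ite, Finset.sum_const, Finset.sum_const,
      Finset.filter_filter]
    have hff : (((Xf ×ˢ Yf) ×ˢ (Xf ×ˢ Yf)).filter
        (fun pp => (pp.1.1 * pp.1.2).right = (pp.2.1 * pp.2.2).right ∧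
          pp.1.1 * pp.1.2 = pp.2.1 * pp.2.2))
        = ((Xf ×ˢ Yf) ×ˢ (Xf ×ˢ Yf)).filter (fun pp => pp.1.1 * pp.1.2 = pp.2.1 * pp.2.2) := by
      apply Finset.filter_congr
      intro pp _
      exact ⟨fun h => h.2, fun h => ⟨by rw [h], h⟩⟩
    rw [hff, smul_zero, add_zero, nsmul_eq_mul]
    ring
  have := main
  rw [← Complex.ofReal_sum] at this
  exact_mod_cast this

/-- I2 : `SqR` at frequency zero equals `Ṅ`. -/
lemma SqR_zero (Xf Yf : Finset (G0 F)) :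
    SqR Xf Yf 0 = ((((Xf ×ˢ Yf) ×ˢ (Xf ×ˢ Yf)).filter
        (fun pp => (pp.1.1 * pp.1.2).right = (pp.2.1 * pp.2.2).right)).card : ℝ) := by
  have hPhi : ∀ m : SO2 F, Phi Xf Yf 0 m
      = (((Xf ×ˢ Yf).filter (fun p => (p.1 * p.2).right = m)).card : ℂ) := by
    intro m
    rw [Phi]
    have : ∀ p ∈ (Xf ×ˢ Yf).filter (fun p => (p.1 * p.2).right = m),
        eV (0 : Fin 2 → F) (zc (p.1 * p.2)) = 1 := by
      intro p _; simp [eV]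
    rw [Finset.sum_congr rfl this, Finset.sum_const, nsmul_eq_mul, mul_one]
  rw [SqR, Finset.sum_congr rfl fun m _ => by
    rw [hPhi m, show ((((Xf ×ˢ Yf).filter (fun p => (p.1 * p.2).right = m)).card : ℂ))
        = (((((Xf ×ˢ Yf).filter (fun p => (p.1 * p.2).right = m)).card : ℝ)) : ℂ) by push_cast; ring,
      Complex.normSq_ofReal]]
  have hc : ((((Xf ×ˢ Yf) ×ˢ (Xf ×ˢ Yf)).filter
      (fun pp => (pp.1.1 * pp.1.2).right = (pp.2.1 * pp.2.2).right)).card)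
      = ∑ m : SO2 F, (((Xf ×ˢ Yf).filter (fun p => (p.1 * p.2).right = m)).card)^2 :=
    count_pairs (Xf ×ˢ Yf) (fun p => (p.1 * p.2).right)
  rw [hc]
  push_cast
  exact Finset.sum_congr rfl fun m _ => by ring

end Main2

section Main3
variable {F : Type} [Field F] [Fintype F] [DecidableEq F] [DecidableEq (G0 F)]
  [DecidableEq (SO2 F)]

lemma eV_add (ξ v w : Fin 2 → F) : eV ξ (v + w) = eV ξ v * eV ξ w := by
  rw [eV, eV, eV, dotProduct_add, AddChar.map_add_eq_mul]

lemma Phi_eq (Xf Yf : Finset (G0 F)) (ξ : Fin 2 → F) (m : SO2 F) :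
    Phi Xf Yf ξ m = ∑ h : SO2 F,
      fhat Xf ξ h * fhat Yf (Matrix.vecMul ξ (SO2.mat h)) (h⁻¹ * m) := by
  have hfib := Finset.sum_fiberwise_of_maps_to
    (s := (Xf ×ˢ Yf).filter fun p => (p.1 * p.2).right = m) (t := (univ : Finset (SO2 F)))
    (g := fun p => p.1.right) (fun p _ => Finset.mem_univ _) (fun p => eV ξ (zc (p.1 * p.2)))
  rw [Phi, ← hfib]
  refine Finset.sum_congr rfl fun h _ => ?_
  have hsplit : ((Xf ×ˢ Yf).filter fun p => (p.1 * p.2).right = m).filter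
        (fun p => p.1.right = h)
      = (Xf.filter fun x => x.right = h) ×ˢ (Yf.filter fun y => y.right = h⁻¹ * m) := by
    ext ⟨x, y⟩
    simp only [Finset.mem_filter, Finset.mem_product, SemidirectProduct.mul_right]
    constructor
    · rintro ⟨⟨⟨hx, hy⟩, hm⟩, hr⟩
      refine ⟨⟨hx, hr⟩, hy, ?_⟩
      rw [← hm, ← hr, inv_mul_cancel_left]
    · rintro ⟨⟨hx, hxr⟩, hy, hyr⟩
      exact ⟨⟨⟨hx, hy⟩, by rw [hxr, hyr, mul_inv_cancel_left]⟩, hxr⟩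
  rw [hsplit, fhat, fhat, Finset.sum_mul_sum, Finset.sum_product]
  refine Finset.sum_congr rfl fun x hx => Finset.sum_congr rfl fun y _ => ?_
  have hxr : x.right = h := (Finset.mem_filter.mp hx).2
  rw [zc_mul, eV_add, eV_mulVec, hxr]

lemma parseval_real (Wf : Finset (G0 F)) (k : SO2 F) :
    ∑ η : Fin 2 → F, Complex.normSq (fhat Wf η k)
      = (Fintype.card F : ℝ)^2 * ((Wf.filter (fun x => x.right = k)).card : ℝ) := by
  have h := parseval Wf k
  rw [← Complex.ofReal_sum] at h
  exact_mod_cast h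

lemma sum_B (Yf : Finset (G0 F)) :
    ∑ η : Fin 2 → F, ∑ k : SO2 F, Complex.normSq (fhat Yf η k)
      = (Fintype.card F : ℝ)^2 * (Yf.card : ℝ) := by
  rw [Finset.sum_comm, Finset.sum_congr rfl fun k (_ : k ∈ univ) => parseval_real Yf k,
    ← Finset.mul_sum]
  congr 1
  have hcard : Yf.card = ∑ k : SO2 F, (Yf.filter (fun x => x.right = k)).card :=
    Finset.card_eq_sum_card_fiberwise (fun x _ => Finset.mem_univ x.right)
  rw [hcard]
  push_cast
  rfl

lemma SqR_le (h2 : (2:F) ≠ 0) (Xf Yf : Finset (G0 F)) (ξ : Fin 2 → F) (hξ : ξ ≠ 0) :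
    SqR Xf Yf ξ ≤ (∑ h : SO2 F, Complex.normSq (fhat Xf ξ h)) *
      ((Fintype.card F : ℝ)^2 * (Yf.card : ℝ)) := by
  set A := ∑ h : SO2 F, Complex.normSq (fhat Xf ξ h) with hA
  have hA0 : 0 ≤ A := Finset.sum_nonneg fun _ _ => Complex.normSq_nonneg _
  have normSq_eq : ∀ z : ℂ, Complex.normSq z = ‖z‖^2 := fun z => by
    rw [Complex.sq_norm]
  have step1 : ∀ m : SO2 F, Complex.normSq (Phi Xf Yf ξ m)
      ≤ A * ∑ h : SO2 F,
          Complex.normSq (fhat Yf (Matrix.vecMul ξ (SO2.mat h)) (h⁻¹ * m)) := by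
    intro m
    rw [Phi_eq, normSq_eq]
    have h1 : ‖∑ h : SO2 F, fhat Xf ξ h * fhat Yf (Matrix.vecMul ξ (SO2.mat h)) (h⁻¹ * m)‖
        ≤ ∑ h : SO2 F, ‖fhat Xf ξ h‖ * ‖fhat Yf (Matrix.vecMul ξ (SO2.mat h)) (h⁻¹ * m)‖ :=
      (norm_sum_le _ _).trans (le_of_eq (Finset.sum_congr rfl fun h _ => norm_mul _ _))
    calc ‖∑ h : SO2 F, fhat Xf ξ h * fhat Yf (Matrix.vecMul ξ (SO2.mat h)) (h⁻¹ * m)‖^2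
        ≤ (∑ h : SO2 F, ‖fhat Xf ξ h‖ *
            ‖fhat Yf (Matrix.vecMul ξ (SO2.mat h)) (h⁻¹ * m)‖)^2 :=
          pow_le_pow_left₀ (norm_nonneg _) h1 2
      _ ≤ (∑ h : SO2 F, ‖fhat Xf ξ h‖^2) * ∑ h : SO2 F,
            ‖fhat Yf (Matrix.vecMul ξ (SO2.mat h)) (h⁻¹ * m)‖^2 :=
          Finset.sum_mul_sq_le_sq_mul_sq univ _ _
      _ = A * ∑ h : SO2 F,
            Complex.normSq (fhat Yf (Matrix.vecMul ξ (SO2.mat h)) (h⁻¹ * m)) := by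
          rw [hA]
          congr 1
          · exact Finset.sum_congr rfl fun h _ => (normSq_eq _).symm
          · exact Finset.sum_congr rfl fun h _ => (normSq_eq _).symm
  have step2 : SqR Xf Yf ξ ≤ A * ∑ m : SO2 F, ∑ h : SO2 F,
      Complex.normSq (fhat Yf (Matrix.vecMul ξ (SO2.mat h)) (h⁻¹ * m)) := by
    rw [SqR, Finset.mul_sum]
    exact Finset.sum_le_sum fun m _ => step1 m
  have step3 : ∑ m : SO2 F, ∑ h : SO2 F,
      Complex.normSq (fhat Yf (Matrix.vecMul ξ (SO2.mat h)) (h⁻¹ * m))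
      = ∑ h : SO2 F, ∑ k : SO2 F, Complex.normSq (fhat Yf (Matrix.vecMul ξ (SO2.mat h)) k) := by
    rw [Finset.sum_comm]
    refine Finset.sum_congr rfl fun h _ => ?_
    exact Fintype.sum_equiv (Equiv.mulLeft h⁻¹) _ _ (fun m => rfl)
  have step4 : ∑ h : SO2 F, ∑ k : SO2 F,
        Complex.normSq (fhat Yf (Matrix.vecMul ξ (SO2.mat h)) k)
      ≤ (Fintype.card F : ℝ)^2 * (Yf.card : ℝ) := by
    rw [← sum_B Yf]
    have hinj := SO2.vecMul_mat_injective h2 ξ hξ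
    have himg : ∑ h : SO2 F, ∑ k : SO2 F,
          Complex.normSq (fhat Yf (Matrix.vecMul ξ (SO2.mat h)) k)
        = ∑ η ∈ (univ : Finset (SO2 F)).image
            (fun h => Matrix.vecMul ξ (SO2.mat h)),
            ∑ k : SO2 F, Complex.normSq (fhat Yf η k) := by
      rw [Finset.sum_image (fun a _ b _ hab => hinj hab)]
    rw [himg]
    exact Finset.sum_le_sum_of_subset_of_nonneg (Finset.subset_univ _)
      (fun η _ _ => Finset.sum_nonneg fun k _ => Complex.normSq_nonneg _)
  calc SqR Xf Yf ξ ≤ A * ∑ m : SO2 F, ∑ h : SO2 F,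
      Complex.normSq (fhat Yf (Matrix.vecMul ξ (SO2.mat h)) (h⁻¹ * m)) := step2
    _ ≤ A * ((Fintype.card F : ℝ)^2 * (Yf.card : ℝ)) := by
        apply mul_le_mul_of_nonneg_left _ hA0
        rw [step3]
        exact step4

lemma sum_A (Xf : Finset (G0 F)) :
    ∑ ξ : Fin 2 → F, ∑ h : SO2 F, Complex.normSq (fhat Xf ξ h)
      = (Fintype.card F : ℝ)^2 * (Xf.card : ℝ) := sum_B Xf

/-- The key energy inequality: `q² E ≤ Ṅ + q⁴ |X||Y|`. -/
lemma energy_bound (h2 : (2:F) ≠ 0) (Xf Yf : Finset (G0 F)) :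
    (Fintype.card F : ℝ)^2 * ((((Xf ×ˢ Yf) ×ˢ (Xf ×ˢ Yf)).filter
        (fun pp => pp.1.1 * pp.1.2 = pp.2.1 * pp.2.2)).card : ℝ)
      ≤ ((((Xf ×ˢ Yf) ×ˢ (Xf ×ˢ Yf)).filter
          (fun pp => (pp.1.1 * pp.1.2).right = (pp.2.1 * pp.2.2).right)).card : ℝ)
        + (Fintype.card F : ℝ)^4 * (Xf.card : ℝ) * (Yf.card : ℝ) := by
  rw [← sum_SqR Xf Yf]
  have hsplit : ∑ ξ : Fin 2 → F, SqR Xf Yf ξ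
      = SqR Xf Yf 0 + ∑ ξ ∈ (univ : Finset (Fin 2 → F)).erase 0, SqR Xf Yf ξ :=
    (Finset.add_sum_erase _ _ (Finset.mem_univ 0)).symm
  rw [hsplit, SqR_zero]
  apply add_le_add le_rfl
  calc ∑ ξ ∈ (univ : Finset (Fin 2 → F)).erase 0, SqR Xf Yf ξ
      ≤ ∑ ξ ∈ (univ : Finset (Fin 2 → F)).erase 0,
          (∑ h : SO2 F, Complex.normSq (fhat Xf ξ h)) *
            ((Fintype.card F : ℝ)^2 * (Yf.card : ℝ)) := by
        refine Finset.sum_le_sum fun ξ hξ => ?_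
        exact SqR_le h2 Xf Yf ξ (Finset.ne_of_mem_erase hξ)
    _ ≤ ∑ ξ : Fin 2 → F, (∑ h : SO2 F, Complex.normSq (fhat Xf ξ h)) *
            ((Fintype.card F : ℝ)^2 * (Yf.card : ℝ)) := by
        refine Finset.sum_le_sum_of_subset_of_nonneg (Finset.erase_subset _ _) ?_
        intro ξ _ _
        apply mul_nonneg (Finset.sum_nonneg fun _ _ => Complex.normSq_nonneg _)
        positivity
    _ = (Fintype.card F : ℝ)^4 * (Xf.card : ℝ) * (Yf.card : ℝ) := by
        rw [← Finset.sum_mul, sum_A]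
        ring

end Main3

section Final
variable {F : Type} [Field F] [Fintype F] [DecidableEq F] [DecidableEq (G0 F)]
  [DecidableEq (SO2 F)]

lemma cs_bound (Xf Yf : Finset (G0 F)) :
    (((Xf ×ˢ Yf).card : ℝ))^2
      ≤ ((((Xf ×ˢ Yf).image (fun p => p.1 * p.2)).card : ℝ))
        * ((((Xf ×ˢ Yf) ×ˢ (Xf ×ˢ Yf)).filter
            (fun pp => pp.1.1 * pp.1.2 = pp.2.1 * pp.2.2)).card : ℝ) := by
  set s := Xf ×ˢ Yf with hs
  set img := s.image (fun p : G0 F × G0 F => p.1 * p.2) with himg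
  have h1 : (s.card : ℝ) = ∑ g ∈ img, ((s.filter (fun p => p.1 * p.2 = g)).card : ℝ) := by
    rw [← Nat.cast_sum]
    exact_mod_cast congrArg (fun n : ℕ => (n : ℝ))
      (Finset.card_eq_sum_card_image (fun p : G0 F × G0 F => p.1 * p.2) s)
  have h2 : (∑ g ∈ img, ((s.filter (fun p => p.1 * p.2 = g)).card : ℝ))^2
      ≤ (img.card : ℝ) * ∑ g ∈ img, ((s.filter (fun p => p.1 * p.2 = g)).card : ℝ)^2 :=
    sq_sum_le_card_mul_sum_sq
  have h3 : ∑ g ∈ img, ((s.filter (fun p => p.1 * p.2 = g)).card : ℝ)^2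
      ≤ (((s ×ˢ s).filter (fun pp => pp.1.1 * pp.1.2 = pp.2.1 * pp.2.2)).card : ℝ) := by
    have hcp : ((s ×ˢ s).filter (fun pp => pp.1.1 * pp.1.2 = pp.2.1 * pp.2.2)).card
        = ∑ g : G0 F, ((s.filter (fun p => p.1 * p.2 = g)).card)^2 :=
      count_pairs s (fun p => p.1 * p.2)
    rw [hcp]
    push_cast
    exact Finset.sum_le_sum_of_subset_of_nonneg (Finset.subset_univ _)
      (fun g _ _ => by positivity)
  calc ((s.card : ℝ))^2 = (∑ g ∈ img, ((s.filter (fun p => p.1 * p.2 = g)).card : ℝ))^2 := by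
        rw [h1]
    _ ≤ (img.card : ℝ) * ∑ g ∈ img, ((s.filter (fun p => p.1 * p.2 = g)).card : ℝ)^2 := h2
    _ ≤ (img.card : ℝ) * (((s ×ˢ s).filter
          (fun pp => pp.1.1 * pp.1.2 = pp.2.1 * pp.2.2)).card : ℝ) := by
        exact mul_le_mul_of_nonneg_left h3 (by positivity)

lemma final_arith (P E S N q2 : ℝ) (hq2 : 0 < q2) (hS : 0 < S) (hN : 0 < N) (hE : 0 < E)
    (h1 : S^2 ≤ P * E) (h2 : q2 * E ≤ N + q2^2 * S) :
    (1/2) * min (q2 * S^2 / N) (S / q2) ≤ P := by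
  have hP0 : 0 < P := by nlinarith
  rcases le_total N (q2^2 * S) with hc | hc
  · have hE2 : E ≤ 2 * q2 * S := by nlinarith
    have hkey : S ≤ 2 * P * q2 := by nlinarith [mul_le_mul_of_nonneg_left hE2 hP0.le]
    have hb : (1/2) * (S / q2) ≤ P := by
      rw [show (1/2) * (S / q2) = S / (2 * q2) by ring, div_le_iff₀ (by positivity)]
      nlinarith
    calc (1/2) * min (q2 * S^2 / N) (S / q2) ≤ (1/2) * (S / q2) := by
          apply mul_le_mul_of_nonneg_left (min_le_right _ _); norm_num
      _ ≤ P := hb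
  · have h3 : q2 * S^2 ≤ 2 * P * N := by
      nlinarith [mul_le_mul_of_nonneg_left h2 hP0.le, mul_le_mul_of_nonneg_left h1 hq2.le]
    have hb : (1/2) * (q2 * S^2 / N) ≤ P := by
      rw [show (1/2) * (q2 * S^2 / N) = (q2 * S^2) / (2 * N) by ring,
        div_le_iff₀ (by positivity)]
      nlinarith
    calc (1/2) * min (q2 * S^2 / N) (S / q2) ≤ (1/2) * (q2 * S^2 / N) := by
          apply mul_le_mul_of_nonneg_left (min_le_left _ _); norm_num
      _ ≤ P := hb

end Final

/-- **Theorem 1.12.** For any nonempty `X, Y ⊆ G₀ = 𝔽_q² ⋊ SO₂(𝔽_q)`,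
`|XY| ≥ (1/2)·min{ q²|X|²|Y|²/Ṅ , |X||Y|/q² }`, where
`Ṅ = #{(g₁,g₂,h₁,h₂) ∈ X²×Y² : ġ₁ḣ₁ = ġ₂ḣ₂}`. -/
theorem product_growth_G0 (F : Type) [Field F] [Fintype F] (q : ℕ) (hq : q = Fintype.card F)
    (hodd : Odd q) (X Y : Set (G0 F)) (hX : X.Nonempty) (hY : Y.Nonempty) :
    (Nat.card ↥(X * Y) : ℝ) ≥
      (1 / 2) * min
        ((q : ℝ) ^ 2 * (Nat.card X : ℝ) ^ 2 * (Nat.card Y : ℝ) ^ 2 /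
          (Nat.card {p : (G0 F × G0 F) × (G0 F × G0 F) //
            p.1.1 ∈ X ∧ p.1.2 ∈ X ∧ p.2.1 ∈ Y ∧ p.2.2 ∈ Y ∧
              p.1.1.right * p.2.1.right = p.1.2.right * p.2.2.right} : ℝ))
        ((Nat.card X : ℝ) * (Nat.card Y : ℝ) / (q : ℝ) ^ 2) := by
  classical
  have hXfin := Set.toFinite X
  have hYfin := Set.toFinite Y
  set Xf := hXfin.toFinset with hXfdef
  set Yf := hYfin.toFinset with hYfdef
  have hXc : (↑Xf : Set (G0 F)) = X := hXfin.coe_toFinset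
  have hYc : (↑Yf : Set (G0 F)) = Y := hYfin.coe_toFinset
  have hqc : (q : ℝ) = (Fintype.card F : ℝ) := by exact_mod_cast congrArg (fun n : ℕ => (n:ℝ)) hq
  -- abbreviations
  set P : ℝ := (((Xf ×ˢ Yf).image (fun p : G0 F × G0 F => p.1 * p.2)).card : ℝ) with hPdef
  set E : ℝ := (((((Xf ×ˢ Yf) ×ˢ (Xf ×ˢ Yf)).filter
      (fun pp => pp.1.1 * pp.1.2 = pp.2.1 * pp.2.2)).card : ℝ)) with hEdef
  set N : ℝ := (((((Xf ×ˢ Yf) ×ˢ (Xf ×ˢ Yf)).filter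
      (fun pp => (pp.1.1 * pp.1.2).right = (pp.2.1 * pp.2.2).right)).card : ℝ)) with hNdef
  set S : ℝ := (((Xf ×ˢ Yf).card : ℝ)) with hSdef
  -- cardinality identifications
  have hcardX : (Nat.card X : ℝ) = (Xf.card : ℝ) := by
    rw [Nat.card_coe_set_eq, ← hXc, Set.ncard_coe_finset]
  have hcardY : (Nat.card Y : ℝ) = (Yf.card : ℝ) := by
    rw [Nat.card_coe_set_eq, ← hYc, Set.ncard_coe_finset]
  have hScard : S = (Nat.card X : ℝ) * (Nat.card Y : ℝ) := by
    rw [hSdef, hcardX, hcardY, Finset.card_product]; push_cast; ring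
  have hPcard : (Nat.card ↥(X * Y) : ℝ) = P := by
    have hset : X * Y = ↑((Xf ×ˢ Yf).image (fun p : G0 F × G0 F => p.1 * p.2)) := by
      rw [← hXc, ← hYc]
      ext z
      simp only [Set.mem_mul, Finset.coe_image, Set.mem_image, Finset.mem_coe,
        Finset.mem_product, Prod.exists]
      constructor
      · rintro ⟨x, hx, y, hy, rfl⟩; exact ⟨x, y, ⟨hx, hy⟩, rfl⟩
      · rintro ⟨x, y, ⟨hx, hy⟩, rfl⟩; exact ⟨x, hx, y, hy, rfl⟩
    rw [hset, Nat.card_coe_set_eq, Set.ncard_coe_finset]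
  have hNcard : ((Nat.card {p : (G0 F × G0 F) × (G0 F × G0 F) //
      p.1.1 ∈ X ∧ p.1.2 ∈ X ∧ p.2.1 ∈ Y ∧ p.2.2 ∈ Y ∧
        p.1.1.right * p.2.1.right = p.1.2.right * p.2.2.right}) : ℝ) = N := by
    have hequiv : {p : (G0 F × G0 F) × (G0 F × G0 F) //
        p.1.1 ∈ X ∧ p.1.2 ∈ X ∧ p.2.1 ∈ Y ∧ p.2.2 ∈ Y ∧
          p.1.1.right * p.2.1.right = p.1.2.right * p.2.2.right}
        ≃ {p : (G0 F × G0 F) × (G0 F × G0 F) //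
            p ∈ (((Xf ×ˢ Yf) ×ˢ (Xf ×ˢ Yf)).filter
              (fun pp => (pp.1.1 * pp.1.2).right = (pp.2.1 * pp.2.2).right))} := by
      refine ⟨fun p => ⟨((p.1.1.1, p.1.2.1), (p.1.1.2, p.1.2.2)), ?_⟩,
        fun p => ⟨((p.1.1.1, p.1.2.1), (p.1.1.2, p.1.2.2)), ?_⟩, ?_, ?_⟩
      · obtain ⟨⟨⟨x₁, x₂⟩, ⟨y₁, y₂⟩⟩, h1, h2, h3, h4, h5⟩ := p
        simp only [Finset.mem_filter, Finset.mem_product, SemidirectProduct.mul_right]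
        exact ⟨⟨⟨hXfin.mem_toFinset.mpr h1, hYfin.mem_toFinset.mpr h3⟩,
          hXfin.mem_toFinset.mpr h2, hYfin.mem_toFinset.mpr h4⟩, h5⟩
      · obtain ⟨⟨⟨x₁, y₁⟩, ⟨x₂, y₂⟩⟩, hp⟩ := p
        simp only [Finset.mem_filter, Finset.mem_product, SemidirectProduct.mul_right] at hp
        exact ⟨hXfin.mem_toFinset.mp hp.1.1.1, hXfin.mem_toFinset.mp hp.1.2.1,
          hYfin.mem_toFinset.mp hp.1.1.2, hYfin.mem_toFinset.mp hp.1.2.2, hp.2⟩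
      · rintro ⟨⟨⟨x₁, x₂⟩, ⟨y₁, y₂⟩⟩, _⟩; rfl
      · rintro ⟨⟨⟨x₁, y₁⟩, ⟨x₂, y₂⟩⟩, _⟩; rfl
    rw [Nat.card_congr hequiv, Nat.card_eq_finsetCard]
  -- positivity facts
  obtain ⟨x₀, hx₀⟩ := hX
  obtain ⟨y₀, hy₀⟩ := hY
  have hp₀ : (x₀, y₀) ∈ Xf ×ˢ Yf := Finset.mem_product.mpr
    ⟨hXfin.mem_toFinset.mpr hx₀, hYfin.mem_toFinset.mpr hy₀⟩
  have hSpos : 0 < S := by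
    rw [hSdef]
    exact_mod_cast Finset.card_pos.mpr ⟨(x₀, y₀), hp₀⟩
  have hEpos : 0 < E := by
    rw [hEdef]
    have : ((x₀, y₀), (x₀, y₀)) ∈ ((Xf ×ˢ Yf) ×ˢ (Xf ×ˢ Yf)).filter
        (fun pp => pp.1.1 * pp.1.2 = pp.2.1 * pp.2.2) :=
      Finset.mem_filter.mpr ⟨Finset.mem_product.mpr ⟨hp₀, hp₀⟩, rfl⟩
    exact_mod_cast Finset.card_pos.mpr ⟨_, this⟩
  have hNpos : 0 < N := by
    rw [hNdef]
    have : ((x₀, y₀), (x₀, y₀)) ∈ ((Xf ×ˢ Yf) ×ˢ (Xf ×ˢ Yf)).filter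
        (fun pp => (pp.1.1 * pp.1.2).right = (pp.2.1 * pp.2.2).right) :=
      Finset.mem_filter.mpr ⟨Finset.mem_product.mpr ⟨hp₀, hp₀⟩, rfl⟩
    exact_mod_cast Finset.card_pos.mpr ⟨_, this⟩
  have hqpos : (0:ℝ) < (q:ℝ)^2 := by
    have : 0 < Fintype.card F := Fintype.card_pos
    rw [hqc]
    positivity
  -- main inequalities
  have h1 : S^2 ≤ P * E := cs_bound Xf Yf
  have h2 : (q:ℝ)^2 * E ≤ N + ((q:ℝ)^2)^2 * S := by
    have := energy_bound (two_ne_zero_of_odd_card (hq ▸ hodd)) Xf Yf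
    rw [hqc]
    calc (Fintype.card F : ℝ)^2 * E ≤ N + (Fintype.card F : ℝ)^4
          * (Xf.card : ℝ) * (Yf.card : ℝ) := this
      _ = N + ((Fintype.card F : ℝ)^2)^2 * S := by
          rw [hSdef, Finset.card_product]; push_cast; ring
  have main := final_arith P E S N ((q:ℝ)^2) hqpos hSpos hNpos hEpos h1 h2
  rw [ge_iff_le, hPcard, hNcard,
    show (q:ℝ)^2 * (Nat.card X : ℝ)^2 * (Nat.card Y : ℝ)^2 = (q:ℝ)^2 * S^2 by
      rw [hScard]; ring,
    show (Nat.card X : ℝ) * (Nat.card Y : ℝ) = S from hScard.symm]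
  exact main
end
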